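/- arXiv:1910.07624 — 7 statements merged into one kernel-verified Lean document; each statement's English description precedes it below -/
import Mathlib

section
/- The principal congruence subgroup Γ(2) of level 2 is contained in the subgroup Γ of Sp(4,ℤ) generated by the four matrices A, B, C, D. -/
/-!
Let `m ∈ Γ(2)`; we reduce it by left multiplication with elements of `Γ`. Its first column has
shape (odd, even, *, even). The copy of `SL(2, ℤ)` acting on coordinates 2 and 4 (generated by
`C` and `D`) clears the fourth entry, and Euclidean algorithms driven by unipotent elements of `Γ`
that add only even multiples where parity must be kept clear the second and third; `-1 ∈ Γ` fixes
the sign, so the column becomes `e₁`. The symplectic relations then put a `1` in the third entry of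
`m e₃`, and elements of `Γ` fixing `e₁` clear its second and fourth entries. A symplectic matrix
with `e₁ ↦ e₁` and `e₃ ↦ p e₁ + e₃` is the transvection `e₃ ↦ p e₁ + e₃` times an element of the
embedded `SL(2, ℤ)`, so `m ∈ Γ` as soon as that transvection is, which holds for even `p`. Odd `p`
is impossible: `Γ` and `Γ(2)` both preserve a quadratic form `Q` mod 2 that the transvection does
not preserve.
-/

open Matrix

namespace GenusTwo

def A : Matrix (Fin 4) (Fin 4) ℤ := !![1,0,0,0; 0,1,0,0; 1,0,1,0; 0,0,0,1]
def B : Matrix (Fin 4) (Fin 4) ℤ := !![1,0,-1,1; 0,1,1,-1; 0,0,1,0; 0,0,0,1]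
def C : Matrix (Fin 4) (Fin 4) ℤ := !![1,0,0,0; 0,1,0,0; 0,0,1,0; 0,1,0,1]
def D : Matrix (Fin 4) (Fin 4) ℤ := !![1,0,0,0; 0,1,0,-1; 0,0,1,0; 0,0,0,1]
def E : Matrix (Fin 4) (Fin 4) ℤ := !![1,0,0,0; 0,1,0,0; 1,1,1,0; 1,1,0,1]

/-- View a `4 × 4` integer matrix as a matrix indexed by `Fin 2 ⊕ Fin 2`, so that it can be
compared with elements of Mathlib's symplectic group `Matrix.symplecticGroup (Fin 2) ℤ`. -/
def r (M : Matrix (Fin 4) (Fin 4) ℤ) : Matrix (Fin 2 ⊕ Fin 2) (Fin 2 ⊕ Fin 2) ℤ :=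
  Matrix.reindex finSumFinEquiv.symm finSumFinEquiv.symm M

/-- The subgroup `Γ` of `Sp(4,ℤ)` generated by the matrices `A`, `B`, `C`, `D`. -/
def Γ : Subgroup (Matrix.symplecticGroup (Fin 2) ℤ) :=
  Subgroup.closure {g | (g : Matrix (Fin 2 ⊕ Fin 2) (Fin 2 ⊕ Fin 2) ℤ) = r A ∨
    (g : Matrix (Fin 2 ⊕ Fin 2) (Fin 2 ⊕ Fin 2) ℤ) = r B ∨
    (g : Matrix (Fin 2 ⊕ Fin 2) (Fin 2 ⊕ Fin 2) ℤ) = r C ∨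
    (g : Matrix (Fin 2 ⊕ Fin 2) (Fin 2 ⊕ Fin 2) ℤ) = r D}

/-- The entrywise reduction homomorphism `Sp(4,ℤ) → Sp(4,ℤ/2ℤ)`. -/
def sred : Matrix.symplecticGroup (Fin 2) ℤ →* Matrix.symplecticGroup (Fin 2) (ZMod 2) where
  toFun g := ⟨(Int.castRingHom (ZMod 2)).mapMatrix
      (g : Matrix (Fin 2 ⊕ Fin 2) (Fin 2 ⊕ Fin 2) ℤ), by
    rw [SymplecticGroup.mem_iff]
    have hg := SymplecticGroup.mem_iff.mp g.2
    have hneg : ((-1 : Matrix (Fin 2) (Fin 2) ℤ).map fun x => ((x : ZMod 2))) = -1 := by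
      ext i j
      simp [Matrix.map_apply, Matrix.one_apply, apply_ite (Int.cast : ℤ → ZMod 2)]
    have hJ : (Int.castRingHom (ZMod 2)).mapMatrix (Matrix.J (Fin 2) ℤ) =
        Matrix.J (Fin 2) (ZMod 2) := by
      rw [RingHom.mapMatrix_apply]
      unfold Matrix.J
      rw [Matrix.fromBlocks_map]
      simp [hneg]
    rw [← hJ, RingHom.mapMatrix_apply, RingHom.mapMatrix_apply, ← Matrix.transpose_map,
      ← Matrix.map_mul, ← Matrix.map_mul, hg]⟩
  map_one' := by
    apply Subtype.ext
    simp
  map_mul' g h := by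
    apply Subtype.ext
    show ((g : Matrix (Fin 2 ⊕ Fin 2) (Fin 2 ⊕ Fin 2) ℤ) *
        (h : Matrix (Fin 2 ⊕ Fin 2) (Fin 2 ⊕ Fin 2) ℤ)).map (Int.castRingHom (ZMod 2)) = _
    rw [Matrix.map_mul]
    rfl

/-- The principal congruence subgroup `Γ(2)`: the kernel of the entrywise reduction
homomorphism `Sp(4,ℤ) → Sp(4,ℤ/2ℤ)`. -/
def Γ₂ : Subgroup (Matrix.symplecticGroup (Fin 2) ℤ) := sred.ker

end GenusTwo

open MatrixGroups

lemma Int.exists_natAbs_sub_mul_le (a : ℤ) {m : ℤ} (hm : m ≠ 0) :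
    ∃ k, 2 * (a - k * m).natAbs ≤ m.natAbs := by
  refine ⟨a.bdiv m.natAbs * m.sign, ?_⟩
  rw [mul_assoc, Int.sign_mul_self_eq_natAbs, ← Int.bmod_eq_self_sub_bdiv_mul]
  have h₁ := Int.le_bmod (x := a) (Int.natAbs_pos.mpr hm)
  have h₂ := Int.bmod_lt (x := a) (Int.natAbs_pos.mpr hm)
  omega

lemma Int.odd_even_euclid_induction {P : ℤ → ℤ → Prop} (base : ∀ a, Odd a → P a 0)
    (add_fst : ∀ a c k, P (a + 2 * k * c) c → P a c)
    (add_snd : ∀ a c k, P a (c + 2 * k * a) → P a c) {a c : ℤ} (ha : Odd a) (hc : Even c) :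
    P a c := by
  induction h : c.natAbs using Nat.strong_induction_on generalizing a c with
  | _ n ih =>
  rcases eq_or_ne c 0 with rfl | hc0
  · exact base a ha
  obtain ⟨k, hk⟩ := Int.exists_natAbs_sub_mul_le a (mul_ne_zero two_ne_zero hc0)
  set a' := a - k * (2 * c)
  have ha' : Odd a' := ha.sub_even ((even_two_mul c).mul_left k)
  have ha'0 : a' ≠ 0 := by rintro h; simp [h] at ha'
  obtain ⟨l, hl⟩ := Int.exists_natAbs_sub_mul_le c (mul_ne_zero two_ne_zero ha'0)
  set c' := c - l * (2 * a')
  have hc' : Even c' := hc.sub ((even_two_mul a').mul_left l)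
  -- Parity rules out equality in the bounds `2 |a'| ≤ 2 |c|` and `2 |c'| ≤ 2 |a'|`.
  have hlt : c'.natAbs < c.natAbs := by
    have := Nat.odd_iff.mp (Int.natAbs_odd.mpr ha')
    have := Nat.even_iff.mp (Int.natAbs_even.mpr hc)
    have := Nat.even_iff.mp (Int.natAbs_even.mpr hc')
    omega
  refine add_fst a c (-k) (add_snd _ c (-l) ?_)
  convert ih _ (h ▸ hlt) ha' hc' rfl using 2 <;> ring

lemma exists_SL2Z_mulVec_eq_cons_zero (b d : ℤ) :
    ∃ (V : SL(2, ℤ)) (g : ℤ), V *ᵥ ![b, d] = ![g, 0] := by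
  rcases eq_or_ne (Int.gcd b d) 0 with h0 | h0
  · obtain ⟨rfl, rfl⟩ := Int.gcd_eq_zero_iff.mp h0
    exact ⟨1, 0, by simp⟩
  obtain ⟨b', hb⟩ := Int.gcd_dvd_left (a := b) (b := d)
  obtain ⟨d', hd⟩ := Int.gcd_dvd_right (a := b) (b := d)
  have hbez := Int.gcd_eq_gcd_ab b d
  have hdet : b.gcdA d * b' + b.gcdB d * d' = 1 := by
    apply mul_left_cancel₀ (Int.natCast_ne_zero.mpr h0)
    linear_combination -hbez - b.gcdA d * hb - b.gcdB d * hd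
  refine ⟨⟨!![b.gcdA d, b.gcdB d; -d', b'], by rw [det_fin_two_of]; linear_combination hdet⟩,
    b.gcd d, ?_⟩
  ext i; fin_cases i <;> simp [mulVec, dotProduct, Fin.sum_univ_two]
  · linear_combination -hbez
  · linear_combination -d' * hb + b' * hd

lemma odd_apply_self_of_mapMatrix_eq_one {n : Type*} [Fintype n] [DecidableEq n]
    {m : Matrix n n ℤ} (h : (Int.castRingHom (ZMod 2)).mapMatrix m = 1) (i : n) :
    Odd (m i i) := by
  simpa [ZMod.intCast_eq_one_iff_odd] using congrFun (congrFun h i) i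

lemma even_apply_of_mapMatrix_eq_one {n : Type*} [Fintype n] [DecidableEq n]
    {m : Matrix n n ℤ} (h : (Int.castRingHom (ZMod 2)).mapMatrix m = 1) {i j : n} (hij : i ≠ j) :
    Even (m i j) := by
  simpa [ZMod.intCast_eq_zero_iff_even, hij] using congrFun (congrFun h i) j

/-- Equal to `X ^ k` when `(X - 1) ^ 2 = 0`, and defined for negative `k` as well. -/
def unipotentPow {R : Type*} [Ring R] (X : R) (k : ℤ) : R := 1 + k • (X - 1)

namespace GenusTwo

local notation "M₄" => Matrix (Fin 4) (Fin 4) ℤ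

def toFin4 : symplecticGroup (Fin 2) ℤ →* M₄ :=
  (reindexAlgEquiv ℤ ℤ finSumFinEquiv).toRingEquiv.toMonoidHom.comp
    (symplecticGroup (Fin 2) ℤ).subtype

lemma toFin4_injective : Function.Injective toFin4 :=
  (reindexAlgEquiv ℤ ℤ finSumFinEquiv).injective.comp Subtype.val_injective

lemma toFin4_eq_iff {γ : symplecticGroup (Fin 2) ℤ} {M : M₄} :
    toFin4 γ = M ↔ (γ : Matrix (Fin 2 ⊕ Fin 2) (Fin 2 ⊕ Fin 2) ℤ) = r M :=
  (reindex finSumFinEquiv finSumFinEquiv).eq_symm_apply.symm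

lemma mapMatrix_toFin4_eq_one {γ : symplecticGroup (Fin 2) ℤ} (hγ : γ ∈ Γ₂) :
    (Int.castRingHom (ZMod 2)).mapMatrix (toFin4 γ) = 1 := by
  have h : (Int.castRingHom (ZMod 2)).mapMatrix γ.1 = 1 := congrArg Subtype.val hγ
  simp only [RingHom.mapMatrix_apply, Int.coe_castRingHom] at h ⊢
  simp [toFin4, reindex_apply, ← submatrix_map, h]

def Sp4 : Submonoid M₄ := MonoidHom.mrange toFin4

def Γ4 : Submonoid M₄ := Γ.toSubmonoid.map toFin4

lemma Γ4_le_Sp4 : Γ4 ≤ Sp4 := by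
  rintro _ ⟨γ, -, rfl⟩
  exact ⟨γ, rfl⟩

lemma toFin4_mem_Γ4 {γ : symplecticGroup (Fin 2) ℤ} : toFin4 γ ∈ Γ4 ↔ γ ∈ Γ :=
  Submonoid.mem_map_iff_mem toFin4_injective

def J4 : M₄ := reindex finSumFinEquiv finSumFinEquiv (J (Fin 2) ℤ)

lemma transpose_mul_J4_mul {m : M₄} (hm : m ∈ Sp4) : mᵀ * J4 * m = J4 := by
  obtain ⟨γ, rfl⟩ := hm
  have h := congrArg (reindexAlgEquiv ℤ ℤ finSumFinEquiv) (SymplecticGroup.mem_iff'.mp γ.2)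
  simpa [toFin4, J4, map_mul, transpose_reindex] using h

def ω (x y : Fin 4 → ℤ) : ℤ := x 2 * y 0 + x 3 * y 1 - x 0 * y 2 - x 1 * y 3

lemma ω_eq_dotProduct (x y : Fin 4 → ℤ) : ω x y = x ⬝ᵥ J4 *ᵥ y := by
  have : J4 = !![0, 0, -1, 0; 0, 0, 0, -1; 1, 0, 0, 0; 0, 1, 0, 0] := by decide
  simp [ω, this, mulVec, dotProduct, Fin.sum_univ_four]
  ring

lemma ω_mulVec {m : M₄} (hm : m ∈ Sp4) (x y : Fin 4 → ℤ) : ω (m *ᵥ x) (m *ᵥ y) = ω x y := by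
  rw [ω_eq_dotProduct, ω_eq_dotProduct, ← vecMul_transpose, ← dotProduct_mulVec, mulVec_mulVec,
    mulVec_mulVec, transpose_mul_J4_mul hm]

lemma exists_inv_mem_Γ4 {w : M₄} (hw : w ∈ Γ4) : ∃ w' ∈ Γ4, w' * w = 1 ∧ w * w' = 1 := by
  obtain ⟨γ, hγ, rfl⟩ := hw
  exact ⟨toFin4 γ⁻¹, toFin4_mem_Γ4.mpr (inv_mem hγ), by simp [← map_mul], by simp [← map_mul]⟩

lemma mem_Γ4_of_mul_eq_one {w x : M₄} (hw : w ∈ Γ4) (h : x * w = 1) : x ∈ Γ4 := by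
  obtain ⟨w', hw', -, hww'⟩ := exists_inv_mem_Γ4 hw
  rwa [← mul_one x, ← hww', ← mul_assoc, h, one_mul]

lemma mem_Γ4_of_mul_mem {w m : M₄} (hw : w ∈ Γ4) (h : w * m ∈ Γ4) : m ∈ Γ4 := by
  obtain ⟨w', hw', hw'w, -⟩ := exists_inv_mem_Γ4 hw
  simpa [← mul_assoc, hw'w] using mul_mem hw' h

lemma unipotentPow_mem_Γ4 {X : M₄} (hX : X ∈ Γ4) (hX2 : (X - 1) * (X - 1) = 0) (k : ℤ) :
    unipotentPow X k ∈ Γ4 := by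
  have step : ∀ k : ℤ, X * unipotentPow X k = unipotentPow X (k + 1) := fun k ↦ by
    have hXN : X * (X - 1) = X - 1 := by rw [← sub_eq_zero, ← hX2]; noncomm_ring
    rw [unipotentPow, unipotentPow, mul_add, mul_one, mul_smul_comm, hXN, add_smul, one_smul]
    abel
  induction k using Int.induction_on with
  | zero => simp [unipotentPow]
  | succ k ih => exact step k ▸ mul_mem hX ih
  | pred k ih => exact mem_Γ4_of_mul_mem hX (by rwa [step, sub_add_cancel])

lemma mem_Γ4_of_generator {M : M₄} (hM : r M ∈ symplecticGroup (Fin 2) ℤ)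
    (hgen : M = A ∨ M = B ∨ M = C ∨ M = D) : M ∈ Γ4 := by
  refine ⟨⟨r M, hM⟩, Subgroup.subset_closure ?_, toFin4_eq_iff.mpr rfl⟩
  rcases hgen with rfl | rfl | rfl | rfl <;> simp

lemma A_mem_Γ4 : A ∈ Γ4 := mem_Γ4_of_generator (by rw [SymplecticGroup.mem_iff]; decide) (by simp)
lemma B_mem_Γ4 : B ∈ Γ4 := mem_Γ4_of_generator (by rw [SymplecticGroup.mem_iff]; decide) (by simp)
lemma C_mem_Γ4 : C ∈ Γ4 := mem_Γ4_of_generator (by rw [SymplecticGroup.mem_iff]; decide) (by simp)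
lemma D_mem_Γ4 : D ∈ Γ4 := mem_Γ4_of_generator (by rw [SymplecticGroup.mem_iff]; decide) (by simp)

def P : M₄ := !![1, 0, 2, 0; 0, 1, 0, 0; 0, 0, 1, 0; 0, 0, 0, 1]
def R : M₄ := !![1, 0, 0, 2; 0, 1, 2, 0; 0, 0, 1, 0; 0, 0, 0, 1]
def T : M₄ := !![1, 2, 0, 0; 0, 1, 0, 0; 0, 0, 1, 0; 0, 0, -2, 1]
def L : M₄ := !![1, 0, 0, 0; 2, 1, 0, 0; 0, 0, 1, -2; 0, 0, 0, 1]

lemma R_mem_Γ4 : R ∈ Γ4 := by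
  have : R = unipotentPow C (-1) * B * unipotentPow D (-1) * unipotentPow C 2 * B *
      unipotentPow D (-1) * unipotentPow C (-1) := by decide
  rw [this]
  apply_rules [mul_mem, unipotentPow_mem_Γ4, B_mem_Γ4, C_mem_Γ4, D_mem_Γ4] <;> decide

lemma P_mem_Γ4 : P ∈ Γ4 := by
  have : P = unipotentPow B (-2) * unipotentPow D 2 * R := by decide
  rw [this]
  apply_rules [mul_mem, unipotentPow_mem_Γ4, B_mem_Γ4, D_mem_Γ4, R_mem_Γ4] <;> decide

lemma T_mem_Γ4 : T ∈ Γ4 := by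
  have : T = D * unipotentPow C 2 * unipotentPow B (-1) * D * unipotentPow C (-2) *
      unipotentPow B (-1) := by decide
  rw [this]
  apply_rules [mul_mem, unipotentPow_mem_Γ4, B_mem_Γ4, C_mem_Γ4, D_mem_Γ4] <;> decide

lemma L_mem_Γ4 : L ∈ Γ4 := by
  have : L = A * unipotentPow D 4 * unipotentPow R (-1) * unipotentPow A (-1) * R := by decide
  rw [this]
  apply_rules [mul_mem, unipotentPow_mem_Γ4, A_mem_Γ4, D_mem_Γ4, R_mem_Γ4] <;> decide

lemma neg_one_mem_Γ4 : -1 ∈ Γ4 := by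
  have : (-1 : M₄) =
      (D * C * D) * (D * C * D) * (unipotentPow A (-1) * P) * (unipotentPow A (-1) * P) := by
    decide
  rw [this]
  apply_rules [mul_mem, unipotentPow_mem_Γ4, A_mem_Γ4, C_mem_Γ4, D_mem_Γ4, P_mem_Γ4] <;> decide

lemma unipotentPow_P (k : ℤ) :
    unipotentPow P k = !![1, 0, 2 * k, 0; 0, 1, 0, 0; 0, 0, 1, 0; 0, 0, 0, 1] := by
  ext i j
  fin_cases i <;> fin_cases j <;> simp [unipotentPow, P, one_apply, -zsmul_eq_mul, mul_comm]

lemma unipotentPow_P_mulVec (k a b c d : ℤ) :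
    unipotentPow P k *ᵥ ![a, b, c, d] = ![a + 2 * k * c, b, c, d] := by
  rw [unipotentPow_P]
  ext i; fin_cases i <;> simp [mulVec, dotProduct, Fin.sum_univ_four]

lemma unipotentPow_A (k : ℤ) :
    unipotentPow A k = !![1, 0, 0, 0; 0, 1, 0, 0; k, 0, 1, 0; 0, 0, 0, 1] := by
  ext i j; fin_cases i <;> fin_cases j <;> simp [unipotentPow, A, one_apply, -zsmul_eq_mul]

lemma unipotentPow_A_mulVec (k a b c d : ℤ) :
    unipotentPow A k *ᵥ ![a, b, c, d] = ![a, b, c + k * a, d] := by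
  rw [unipotentPow_A]
  ext i; fin_cases i <;> simp [mulVec, dotProduct, Fin.sum_univ_four, add_comm]

lemma unipotentPow_T (k : ℤ) :
    unipotentPow T k = !![1, 2 * k, 0, 0; 0, 1, 0, 0; 0, 0, 1, 0; 0, 0, -2 * k, 1] := by
  ext i j
  fin_cases i <;> fin_cases j <;> simp [unipotentPow, T, one_apply, -zsmul_eq_mul, mul_comm]

lemma unipotentPow_T_mulVec (k a b c d : ℤ) :
    unipotentPow T k *ᵥ ![a, b, c, d] = ![a + 2 * k * b, b, c, d - 2 * k * c] := by
  rw [unipotentPow_T]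
  ext i; fin_cases i <;> simp [mulVec, dotProduct, Fin.sum_univ_four, sub_eq_add_neg, add_comm]

lemma unipotentPow_L (k : ℤ) :
    unipotentPow L k = !![1, 0, 0, 0; 2 * k, 1, 0, 0; 0, 0, 1, -2 * k; 0, 0, 0, 1] := by
  ext i j
  fin_cases i <;> fin_cases j <;> simp [unipotentPow, L, one_apply, -zsmul_eq_mul, mul_comm]

lemma unipotentPow_L_mulVec (k a b c d : ℤ) :
    unipotentPow L k *ᵥ ![a, b, c, d] = ![a, b + 2 * k * a, c - 2 * k * d, d] := by
  rw [unipotentPow_L]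
  ext i; fin_cases i <;> simp [mulVec, dotProduct, Fin.sum_univ_four] <;> ring

lemma unipotentPow_B (k : ℤ) :
    unipotentPow B k = !![1, 0, -k, k; 0, 1, k, -k; 0, 0, 1, 0; 0, 0, 0, 1] := by
  ext i j; fin_cases i <;> fin_cases j <;> simp [unipotentPow, B, one_apply, -zsmul_eq_mul]

lemma unipotentPow_B_mulVec (k a b c d : ℤ) :
    unipotentPow B k *ᵥ ![a, b, c, d] = ![a - k * (c - d), b + k * (c - d), c, d] := by
  rw [unipotentPow_B]
  ext i; fin_cases i <;> simp [mulVec, dotProduct, Fin.sum_univ_four] <;> ring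

def embedSL2 : SL(2, ℤ) →* M₄ where
  toFun V := !![1, 0, 0, 0; 0, V 0 0, 0, V 0 1; 0, 0, 1, 0; 0, V 1 0, 0, V 1 1]
  map_one' := by ext i j; fin_cases i <;> fin_cases j <;> simp
  map_mul' V W := by
    ext i j; fin_cases i <;> fin_cases j <;> simp [mul_apply, Fin.sum_univ_four, Fin.sum_univ_two]

lemma embedSL2_mulVec (V : SL(2, ℤ)) (a b c d : ℤ) :
    embedSL2 V *ᵥ ![a, b, c, d] =
      ![a, ((V : Matrix (Fin 2) (Fin 2) ℤ) *ᵥ ![b, d]) 0, c,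
        ((V : Matrix (Fin 2) (Fin 2) ℤ) *ᵥ ![b, d]) 1] := by
  ext i; fin_cases i <;> simp [embedSL2, mulVec, dotProduct, Fin.sum_univ_four, Fin.sum_univ_two]

lemma embedSL2_mem_Γ4 (V : SL(2, ℤ)) : embedSL2 V ∈ Γ4 := by
  have hV : V ∈ Subgroup.closure {ModularGroup.S, ModularGroup.T} := by
    simp [SpecialLinearGroup.SL2Z_generators]
  induction hV using Subgroup.closure_induction with
  | mem V hV =>
    rcases hV with rfl | rfl
    · have : embedSL2 ModularGroup.S = D * C * D := by decide
      exact this ▸ mul_mem (mul_mem D_mem_Γ4 C_mem_Γ4) D_mem_Γ4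
    · exact mem_Γ4_of_mul_eq_one D_mem_Γ4 (by decide)
  | one => simp [one_mem]
  | mul V W _ _ hV hW => simpa using mul_mem hV hW
  | inv V _ hV => exact mem_Γ4_of_mul_eq_one hV (by rw [← map_mul, inv_mul_cancel, map_one])

/-- Its polarization is `ω` mod 2; the linear part is what makes `A`, `B`, `C`, `D` preserve it. -/
def Q (v : Fin 4 → ZMod 2) : ZMod 2 := v 0 * v 2 + v 1 * v 3 + v 1 + v 2 + v 3

def Θ4 : Submonoid M₄ where
  carrier := {m | ∀ v, Q ((Int.castRingHom (ZMod 2)).mapMatrix m *ᵥ v) = Q v}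
  mul_mem' {x y} hx hy v := by
    rw [map_mul, ← mulVec_mulVec]
    exact (hx _).trans (hy v)
  one_mem' v := by simp

lemma mem_Θ4_of_mul_eq_one {x y : M₄} (hx : x ∈ Θ4) (h : x * y = 1) : y ∈ Θ4 := fun v ↦ by
  rw [← hx, mulVec_mulVec, ← map_mul, h, map_one, one_mulVec]

lemma mem_Θ4_of_mapMatrix_eq_one {m : M₄} (h : (Int.castRingHom (ZMod 2)).mapMatrix m = 1) :
    m ∈ Θ4 := fun v ↦ by rw [h, one_mulVec]

lemma Γ4_le_Θ4 : Γ4 ≤ Θ4 := by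
  rintro _ ⟨γ, hγ, rfl⟩
  induction hγ using Subgroup.closure_induction with
  | mem γ hγ =>
    rcases hγ with h | h | h | h <;> rw [toFin4_eq_iff.mpr h] <;> intro v <;> revert v <;> decide
  | one => simp [one_mem]
  | mul γ δ _ _ hγ hδ => simpa using mul_mem hγ hδ
  | inv γ _ hγ => exact mem_Θ4_of_mul_eq_one hγ (by rw [← map_mul, mul_inv_cancel, map_one])

lemma transvection_not_mem_Θ4 {p : ℤ} (hp : Odd p) : transvection (0 : Fin 4) 2 p ∉ Θ4 :=
  fun h ↦ by
    have := h ![0, 0, 1, 0]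
    simp [Q, transvection, mulVec, dotProduct, Fin.sum_univ_four,
      ZMod.intCast_eq_one_iff_odd.mpr hp] at this

lemma transvection_two_mul_mem_Γ4 (k : ℤ) : transvection (0 : Fin 4) 2 (2 * k) ∈ Γ4 := by
  have : transvection (0 : Fin 4) 2 (2 * k) = unipotentPow P k := by
    rw [unipotentPow_P]
    ext i j; fin_cases i <;> fin_cases j <;> simp [transvection, one_apply]
  exact this ▸ unipotentPow_mem_Γ4 P_mem_Γ4 (by decide) k

def ReachesAxis (v : Fin 4 → ℤ) : Prop := ∃ w ∈ Γ4, ∃ x, w *ᵥ v = ![x, 0, 0, 0]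

lemma ReachesAxis.of_mulVec_eq {g : M₄} {v v' : Fin 4 → ℤ} (hg : g ∈ Γ4) (hv : g *ᵥ v = v')
    (h : ReachesAxis v') : ReachesAxis v := by
  obtain ⟨w, hw, x, hx⟩ := h
  exact ⟨w * g, mul_mem hw hg, x, by rw [← mulVec_mulVec, hv, hx]⟩

lemma reachesAxis_cons₂ {a b : ℤ} (ha : Odd a) (hb : Even b) : ReachesAxis ![a, b, 0, 0] := by
  refine Int.odd_even_euclid_induction (P := fun a b ↦ ReachesAxis ![a, b, 0, 0]) ?_ ?_ ?_ ha hb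
  · exact fun a _ ↦ ⟨1, one_mem _, a, one_mulVec _⟩
  · exact fun a b k ↦ .of_mulVec_eq (unipotentPow_mem_Γ4 T_mem_Γ4 (by decide) k)
      (by simp [unipotentPow_T_mulVec])
  · exact fun a b k ↦ .of_mulVec_eq (unipotentPow_mem_Γ4 L_mem_Γ4 (by decide) k)
      (by simp [unipotentPow_L_mulVec])

lemma reachesAxis_cons₃ {a b : ℤ} (c : ℤ) (ha : Odd a) (hb : Even b) :
    ReachesAxis ![a, b, c, 0] := by
  have heven : ∀ c, Even c → ReachesAxis ![a, b, c, 0] := fun c hc ↦ by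
    refine Int.odd_even_euclid_induction (P := fun a c ↦ ReachesAxis ![a, b, c, 0])
      ?_ ?_ ?_ ha hc
    · exact fun a ha ↦ reachesAxis_cons₂ ha hb
    · exact fun a c k ↦ .of_mulVec_eq (unipotentPow_mem_Γ4 P_mem_Γ4 (by decide) k)
        (unipotentPow_P_mulVec ..)
    · exact fun a c k ↦ .of_mulVec_eq (unipotentPow_mem_Γ4 A_mem_Γ4 (by decide) (2 * k))
        (unipotentPow_A_mulVec ..)
  rcases c.even_or_odd with hc | hc
  · exact heven c hc
  · exact .of_mulVec_eq (unipotentPow_mem_Γ4 A_mem_Γ4 (by decide) 1)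
      (by rw [unipotentPow_A_mulVec, one_mul]) (heven _ (hc.add_odd ha))

lemma reachesAxis_cons₄ {a b d : ℤ} (c : ℤ) (ha : Odd a) (hb : Even b) (hd : Even d) :
    ReachesAxis ![a, b, c, d] := by
  obtain ⟨V, g, hV⟩ := exists_SL2Z_mulVec_eq_cons_zero b d
  have hg : g = V 0 0 * b + V 0 1 * d := by
    simpa [mulVec, dotProduct, Fin.sum_univ_two] using (congrFun hV 0).symm
  refine .of_mulVec_eq (embedSL2_mem_Γ4 V) ?_
    (reachesAxis_cons₃ c ha (hg ▸ (hb.mul_left _).add (hd.mul_left _)))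
  rw [embedSL2_mulVec, hV]
  simp

lemma eq_one_or_neg_one_of_mulVec_eq {m : M₄} (hm : m ∈ Sp4) {x : ℤ}
    (h : m *ᵥ ![1, 0, 0, 0] = ![x, 0, 0, 0]) : x = 1 ∨ x = -1 := by
  have hω := ω_mulVec hm ![1, 0, 0, 0] ![0, 0, 1, 0]
  rw [h] at hω
  have hx : x * m 2 2 = 1 := by simpa [ω, mulVec, dotProduct, Fin.sum_univ_four] using hω
  exact Int.eq_one_or_neg_one_of_mul_eq_one hx

lemma exists_mem_Γ4_mul_mulVec_e₁ {m : M₄} (hm : m ∈ Sp4)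
    (h0 : Odd (m 0 0)) (h1 : Even (m 1 0)) (h3 : Even (m 3 0)) :
    ∃ w ∈ Γ4, (w * m) *ᵥ ![1, 0, 0, 0] = ![1, 0, 0, 0] := by
  have hcol : m *ᵥ ![1, 0, 0, 0] = ![m 0 0, m 1 0, m 2 0, m 3 0] := by
    ext i; fin_cases i <;> simp [mulVec, dotProduct, Fin.sum_univ_four]
  obtain ⟨w, hw, x, hx⟩ := reachesAxis_cons₄ (m 2 0) h0 h1 h3
  rw [← hcol, mulVec_mulVec] at hx
  rcases eq_one_or_neg_one_of_mulVec_eq (mul_mem (Γ4_le_Sp4 hw) hm) hx with rfl | rfl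
  · exact ⟨w, hw, hx⟩
  · refine ⟨-1 * w, mul_mem neg_one_mem_Γ4 hw, ?_⟩
    rw [mul_assoc, ← mulVec_mulVec, hx]
    simp [neg_mulVec]

lemma exists_mem_Γ4_mul_mulVec_e₃ {m : M₄} (hm : m ∈ Sp4)
    (h : m *ᵥ ![1, 0, 0, 0] = ![1, 0, 0, 0]) :
    ∃ w ∈ Γ4, ∃ p, (w * m) *ᵥ ![1, 0, 0, 0] = ![1, 0, 0, 0] ∧
      (w * m) *ᵥ ![0, 0, 1, 0] = ![p, 0, 1, 0] := by
  have h22 : m 2 2 = 1 := by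
    have hω := ω_mulVec hm ![1, 0, 0, 0] ![0, 0, 1, 0]
    rw [h] at hω
    simpa [ω, mulVec, dotProduct, Fin.sum_univ_four] using hω
  have hcol : m *ᵥ ![0, 0, 1, 0] = ![m 0 2, m 1 2, 1, m 3 2] := by
    ext i; fin_cases i <;> simp [mulVec, dotProduct, Fin.sum_univ_four, h22]
  obtain ⟨V, g, hV⟩ := exists_SL2Z_mulVec_eq_cons_zero (m 1 2) (m 3 2)
  refine ⟨unipotentPow B (-g) * embedSL2 V,
    mul_mem (unipotentPow_mem_Γ4 B_mem_Γ4 (by decide) _) (embedSL2_mem_Γ4 V), m 0 2 + g, ?_, ?_⟩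
  · rw [← mulVec_mulVec, ← mulVec_mulVec, h, embedSL2_mulVec, unipotentPow_B_mulVec]
    simp
  · rw [← mulVec_mulVec, ← mulVec_mulVec, hcol, embedSL2_mulVec, hV, unipotentPow_B_mulVec]
    simp

lemma exists_eq_transvection_mul_embedSL2 {m : M₄} (hm : m ∈ Sp4) {p : ℤ}
    (h₁ : m *ᵥ ![1, 0, 0, 0] = ![1, 0, 0, 0]) (h₃ : m *ᵥ ![0, 0, 1, 0] = ![p, 0, 1, 0]) :
    ∃ V : SL(2, ℤ), m = transvection 0 2 p * embedSL2 V := by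
  obtain ⟨h00, h10, h20, h30⟩ : m 0 0 = 1 ∧ m 1 0 = 0 ∧ m 2 0 = 0 ∧ m 3 0 = 0 := by
    simpa [funext_iff, Fin.forall_fin_succ, mulVec, dotProduct, Fin.sum_univ_four] using h₁
  obtain ⟨h02, h12, h22, h32⟩ : m 0 2 = p ∧ m 1 2 = 0 ∧ m 2 2 = 1 ∧ m 3 2 = 0 := by
    simpa [funext_iff, Fin.forall_fin_succ, mulVec, dotProduct, Fin.sum_univ_four] using h₃
  have ω₁ (y : Fin 4 → ℤ) : ω ![1, 0, 0, 0] (m *ᵥ y) = ω ![1, 0, 0, 0] y := by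
    simpa only [h₁] using ω_mulVec hm ![1, 0, 0, 0] y
  have ω₃ (y : Fin 4 → ℤ) : ω ![p, 0, 1, 0] (m *ᵥ y) = ω ![0, 0, 1, 0] y := by
    simpa only [h₃] using ω_mulVec hm ![0, 0, 1, 0] y
  have h21 : m 2 1 = 0 := by
    simpa [ω, mulVec, dotProduct, Fin.sum_univ_four] using ω₁ ![0, 1, 0, 0]
  have h23 : m 2 3 = 0 := by
    simpa [ω, mulVec, dotProduct, Fin.sum_univ_four] using ω₁ ![0, 0, 0, 1]
  have h01 : m 0 1 = 0 := by
    simpa [ω, mulVec, dotProduct, Fin.sum_univ_four, h21] using ω₃ ![0, 1, 0, 0]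
  have h03 : m 0 3 = 0 := by
    simpa [ω, mulVec, dotProduct, Fin.sum_univ_four, h23] using ω₃ ![0, 0, 0, 1]
  have hdet : m 3 1 * m 1 3 - m 1 1 * m 3 3 = -1 := by
    simpa [ω, mulVec, dotProduct, Fin.sum_univ_four, h21, h23, h01, h03]
      using ω_mulVec hm ![0, 1, 0, 0] ![0, 0, 0, 1]
  refine ⟨⟨!![m 1 1, m 1 3; m 3 1, m 3 3], by rw [det_fin_two_of]; linear_combination -hdet⟩, ?_⟩
  ext i j
  fin_cases i <;> fin_cases j <;> simp [transvection, embedSL2, mul_apply, Fin.sum_univ_four,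
    one_apply, h00, h10, h20, h30, h02, h12, h22, h32, h01, h03, h21, h23]

lemma exists_mem_Γ4_mul_eq_transvection_mul_embedSL2 {m : M₄} (hm : m ∈ Sp4)
    (h0 : Odd (m 0 0)) (h1 : Even (m 1 0)) (h3 : Even (m 3 0)) :
    ∃ w ∈ Γ4, ∃ (p : ℤ) (V : SL(2, ℤ)), w * m = transvection 0 2 p * embedSL2 V := by
  obtain ⟨w₁, hw₁, he₁⟩ := exists_mem_Γ4_mul_mulVec_e₁ hm h0 h1 h3
  have hm₁ := mul_mem (Γ4_le_Sp4 hw₁) hm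
  obtain ⟨w₂, hw₂, p, he₁', he₃⟩ := exists_mem_Γ4_mul_mulVec_e₃ hm₁ he₁
  obtain ⟨V, hV⟩ := exists_eq_transvection_mul_embedSL2 (mul_mem (Γ4_le_Sp4 hw₂) hm₁) he₁' he₃
  exact ⟨w₂ * w₁, mul_mem hw₂ hw₁, p, V, by rw [mul_assoc, hV]⟩

/-- The principal congruence subgroup `Γ(2)` of level `2` is contained in the subgroup `Γ`
of `Sp(4,ℤ)` generated by the four matrices `A`, `B`, `C`, `D`. -/
theorem gamma2_le_gamma : Γ₂ ≤ Γ := by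
  intro M hM
  have hmod := mapMatrix_toFin4_eq_one hM
  obtain ⟨w, hw, p, V, h⟩ := exists_mem_Γ4_mul_eq_transvection_mul_embedSL2 ⟨M, rfl⟩
    (odd_apply_self_of_mapMatrix_eq_one hmod 0) (even_apply_of_mapMatrix_eq_one hmod (by decide))
    (even_apply_of_mapMatrix_eq_one hmod (by decide))
  obtain ⟨k, rfl | rfl⟩ := p.even_or_odd'
  · rw [← toFin4_mem_Γ4]
    exact mem_Γ4_of_mul_mem hw (h ▸ mul_mem (transvection_two_mul_mem_Γ4 k) (embedSL2_mem_Γ4 V))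
  · have : transvection 0 2 (2 * k + 1) = w * toFin4 M * embedSL2 V⁻¹ := by
      rw [h, mul_assoc, ← map_mul, mul_inv_cancel, map_one, mul_one]
    refine absurd ?_ (transvection_not_mem_Θ4 (odd_two_mul_add_one k))
    rw [this]
    exact mul_mem (mul_mem (Γ4_le_Θ4 hw) (mem_Θ4_of_mapMatrix_eq_one hmod))
      (Γ4_le_Θ4 (embedSL2_mem_Γ4 _))

end GenusTwo
end

section
/- The five matrices A, B, C, D, E generate the full symplectic group Sp(4,ℤ); that is, the subgroup of Sp(4,ℤ) generated by {A, B, C, D, E} is all of Sp(4,ℤ). -/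
/-!
Sp(4,ℤ) is generated by the symmetric unipotents `[[1, S], [0, 1]]` and `[[1, 0], [S, 1]]`.
Write `e₁, e₂, f₁, f₂` for the basis vectors indexed by `inl 0, inl 1, inr 0, inr 1`. Each
hyperbolic pair `(eₖ, fₖ)` carries a copy of SL(2,ℤ), generated by such unipotents, which runs
the Euclidean algorithm on the corresponding pair of coordinates. With these and a few unipotents
any `M` is moved to a matrix fixing `e₁` (the first column of `M` is primitive, as `M` is
invertible), and then `f₁`; a symplectic matrix fixing `e₁` and `f₁` lies in the SL(2,ℤ) of
the second pair. Finally, `A`, `C`, `E` generate the lower unipotents, while `B`, `D` and the upper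
unipotent with `S = E₁₁`, which is `(DCBA)⁻¹ E⁻¹ (DCBA)`, generate the upper ones.
-/

open Matrix

namespace GenusTwo

open Function MatrixGroups

section Unipotent

variable {l R : Type*} [Fintype l] [DecidableEq l] [CommRing R]

def lowerUnipotent (S : Matrix l l R) (hS : S.IsSymm) : symplecticGroup l R :=
  ⟨fromBlocks 1 0 S 1, by
    rw [SymplecticGroup.mem_iff, J, fromBlocks_transpose, hS.eq]
    simp [fromBlocks_multiply]⟩

def upperUnipotent (S : Matrix l l R) (hS : S.IsSymm) : symplecticGroup l R :=
  ⟨fromBlocks 1 S 0 1, by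
    rw [SymplecticGroup.mem_iff, J, fromBlocks_transpose, hS.eq]
    simp [fromBlocks_multiply]⟩

@[simp]
theorem coe_lowerUnipotent (S : Matrix l l R) (hS : S.IsSymm) :
    (lowerUnipotent S hS : Matrix (l ⊕ l) (l ⊕ l) R) = fromBlocks 1 0 S 1 := rfl

@[simp]
theorem coe_upperUnipotent (S : Matrix l l R) (hS : S.IsSymm) :
    (upperUnipotent S hS : Matrix (l ⊕ l) (l ⊕ l) R) = fromBlocks 1 S 0 1 := rfl

theorem lowerUnipotent_mul {S T : Matrix l l R} (hS : S.IsSymm) (hT : T.IsSymm) :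
    lowerUnipotent S hS * lowerUnipotent T hT = lowerUnipotent (S + T) (hS.add hT) := by
  ext1; simp [fromBlocks_multiply]

theorem upperUnipotent_mul {S T : Matrix l l R} (hS : S.IsSymm) (hT : T.IsSymm) :
    upperUnipotent S hS * upperUnipotent T hT = upperUnipotent (S + T) (hS.add hT) := by
  ext1; simp [fromBlocks_multiply, add_comm T]

theorem lowerUnipotent_neg {S : Matrix l l R} (hS : S.IsSymm) :
    lowerUnipotent (-S) hS.neg = (lowerUnipotent S hS)⁻¹ :=
  eq_inv_of_mul_eq_one_right <| by rw [lowerUnipotent_mul]; ext1; simp [fromBlocks_one]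

theorem upperUnipotent_neg {S : Matrix l l R} (hS : S.IsSymm) :
    upperUnipotent (-S) hS.neg = (upperUnipotent S hS)⁻¹ :=
  eq_inv_of_mul_eq_one_right <| by rw [upperUnipotent_mul]; ext1; simp [fromBlocks_one]

theorem lowerUnipotent_zpow {S : Matrix l l R} (hS : S.IsSymm) (n : ℤ) :
    lowerUnipotent S hS ^ n = lowerUnipotent (n • S) (hS.smul n) := by
  induction n using Int.induction_on with
  | zero => ext1; simp [fromBlocks_one]
  | succ n ih => rw [_root_.zpow_add_one, ih, lowerUnipotent_mul]; ext1; simp [add_smul]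
  | pred n ih =>
    rw [_root_.zpow_sub_one, ih, ← lowerUnipotent_neg, lowerUnipotent_mul]
    ext1; simp only [coe_lowerUnipotent, sub_eq_add_neg, add_smul, neg_smul, one_smul]

theorem upperUnipotent_zpow {S : Matrix l l R} (hS : S.IsSymm) (n : ℤ) :
    upperUnipotent S hS ^ n = upperUnipotent (n • S) (hS.smul n) := by
  induction n using Int.induction_on with
  | zero => ext1; simp [fromBlocks_one]
  | succ n ih => rw [_root_.zpow_add_one, ih, upperUnipotent_mul]; ext1; simp [add_smul]
  | pred n ih =>
    rw [_root_.zpow_sub_one, ih, ← upperUnipotent_neg, upperUnipotent_mul]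
    ext1; simp only [coe_upperUnipotent, sub_eq_add_neg, add_smul, neg_smul, one_smul]

theorem lowerUnipotent_mulVec (S : Matrix l l R) (hS : S.IsSymm) (x y : l → R) :
    (lowerUnipotent S hS : Matrix (l ⊕ l) (l ⊕ l) R) *ᵥ Sum.elim x y =
      Sum.elim x (S *ᵥ x + y) := by
  simp [fromBlocks_mulVec]

theorem upperUnipotent_mulVec (S : Matrix l l R) (hS : S.IsSymm) (x y : l → R) :
    (upperUnipotent S hS : Matrix (l ⊕ l) (l ⊕ l) R) *ᵥ Sum.elim x y =
      Sum.elim (x + S *ᵥ y) y := by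
  simp [fromBlocks_mulVec]

variable (l R) in
def symmetricUnipotents : Set (symplecticGroup l R) :=
  {M | ∃ S hS, M = lowerUnipotent S hS ∨ M = upperUnipotent S hS}

theorem lowerUnipotent_mem_closure (S : Matrix l l R) (hS : S.IsSymm) :
    lowerUnipotent S hS ∈ Subgroup.closure (symmetricUnipotents l R) :=
  Subgroup.subset_closure ⟨S, hS, Or.inl rfl⟩

theorem upperUnipotent_mem_closure (S : Matrix l l R) (hS : S.IsSymm) :
    upperUnipotent S hS ∈ Subgroup.closure (symmetricUnipotents l R) :=
  Subgroup.subset_closure ⟨S, hS, Or.inr rfl⟩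

theorem J_mulVec (x y : l → R) : J l R *ᵥ Sum.elim x y = Sum.elim (-y) x := by
  simp [J, fromBlocks_mulVec, neg_mulVec]

theorem transpose_mulVec_J_mulVec_of_mulVec_eq {M : Matrix (l ⊕ l) (l ⊕ l) R}
    (hM : M ∈ symplecticGroup l R) {v : l ⊕ l → R} (hv : M *ᵥ v = v) :
    Mᵀ *ᵥ (J l R *ᵥ v) = J l R *ᵥ v := by
  conv_lhs => rw [← hv]
  rw [mulVec_mulVec, mulVec_mulVec, SymplecticGroup.mem_iff'.1 hM]

theorem row_inr_eq_single_of_mulVec_single_inl {M : Matrix (l ⊕ l) (l ⊕ l) R}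
    (hM : M ∈ symplecticGroup l R) {i : l}
    (h : M *ᵥ Pi.single (.inl i) 1 = Pi.single (.inl i) 1) :
    M.row (.inr i) = Pi.single (.inr i) 1 := by
  have hJ := transpose_mulVec_J_mulVec_of_mulVec_eq hM h
  rwa [← Sum.elim_single_zero, J_mulVec, neg_zero, Sum.elim_zero_single, mulVec_single_one,
    col_transpose] at hJ

theorem row_inl_eq_single_of_mulVec_single_inr {M : Matrix (l ⊕ l) (l ⊕ l) R}
    (hM : M ∈ symplecticGroup l R) {i : l}
    (h : M *ᵥ Pi.single (.inr i) 1 = Pi.single (.inr i) 1) :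
    M.row (.inl i) = Pi.single (.inl i) 1 := by
  have hJ := transpose_mulVec_J_mulVec_of_mulVec_eq hM h
  rwa [← Sum.elim_zero_single, J_mulVec, ← Pi.single_neg, Sum.elim_single_zero, Pi.single_neg,
    mulVec_neg, neg_inj, mulVec_single_one, col_transpose] at hJ

end Unipotent

section HyperbolicPair

variable {l R : Type*} [DecidableEq l] [CommRing R]

def hyperbolicPairMatrix (k : l) (g : Matrix (Fin 2) (Fin 2) R) : Matrix (l ⊕ l) (l ⊕ l) R :=
  fromBlocks (diagonal (update 1 k (g 0 0))) (diagonal (Pi.single k (g 0 1)))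
    (diagonal (Pi.single k (g 1 0))) (diagonal (update 1 k (g 1 1)))

theorem hyperbolicPairMatrix_one (k : l) :
    hyperbolicPairMatrix k (1 : Matrix (Fin 2) (Fin 2) R) = 1 := by
  simp [hyperbolicPairMatrix, ← fromBlocks_one]

variable [Fintype l]

theorem hyperbolicPairMatrix_mul (k : l) (g h : Matrix (Fin 2) (Fin 2) R) :
    hyperbolicPairMatrix k (g * h) = hyperbolicPairMatrix k g * hyperbolicPairMatrix k h := by
  simp only [hyperbolicPairMatrix, fromBlocks_multiply, diagonal_mul_diagonal, diagonal_add]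
  congr 1 <;> congr 1 <;> funext i <;> by_cases hi : i = k <;>
    simp [hi, mul_apply, Fin.sum_univ_two]

theorem hyperbolicPairMatrix_mem_symplecticGroup_iff (k : l) (g : Matrix (Fin 2) (Fin 2) R) :
    hyperbolicPairMatrix k g ∈ symplecticGroup l R ↔ g.det = 1 := by
  rw [SymplecticGroup.mem_iff, J, ← diagonal_zero, ← diagonal_one, diagonal_neg]
  simp only [hyperbolicPairMatrix, fromBlocks_transpose, fromBlocks_multiply, diagonal_transpose,
    diagonal_mul_diagonal, diagonal_add, fromBlocks_inj, diagonal_eq_diagonal_iff]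
  rw [det_fin_two]
  constructor
  · rintro ⟨-, -, h, -⟩
    simpa [mul_comm, sub_eq_add_neg] using h k
  · intro hg
    refine ⟨fun i => ?_, fun i => ?_, fun i => ?_, fun i => ?_⟩ <;>
      by_cases hi : i = k <;> simp [hi] <;> grind

theorem hyperbolicPairMatrix_mulVec (k : l) (g : Matrix (Fin 2) (Fin 2) R) (x y : l → R) :
    hyperbolicPairMatrix k g *ᵥ Sum.elim x y =
      Sum.elim (update x k (g 0 0 * x k + g 0 1 * y k))
        (update y k (g 1 0 * x k + g 1 1 * y k)) := by
  simp only [hyperbolicPairMatrix, fromBlocks_mulVec]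
  congr 1 <;> funext i <;> by_cases hi : i = k <;> simp [hi, mulVec_diagonal]

def hyperbolicPairEmbedding (k : l) : SL(2, R) →* symplecticGroup l R where
  toFun g := ⟨hyperbolicPairMatrix k (g : Matrix (Fin 2) (Fin 2) R),
    (hyperbolicPairMatrix_mem_symplecticGroup_iff k _).2 g.det_coe⟩
  map_one' := Subtype.ext <| by simp [hyperbolicPairMatrix_one]
  map_mul' g h := Subtype.ext <| by simp [hyperbolicPairMatrix_mul]

@[simp]
theorem coe_hyperbolicPairEmbedding (k : l) (g : SL(2, R)) :
    (hyperbolicPairEmbedding k g : Matrix (l ⊕ l) (l ⊕ l) R) =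
      hyperbolicPairMatrix k (g : Matrix (Fin 2) (Fin 2) R) := rfl

end HyperbolicPair

theorem hyperbolicPairEmbedding_mem_closure {l : Type*} [Fintype l] [DecidableEq l] (k : l)
    (g : SL(2, ℤ)) :
    hyperbolicPairEmbedding k g ∈ Subgroup.closure (symmetricUnipotents l ℤ) := by
  have hE : (diagonal (Pi.single k 1) : Matrix l l ℤ).IsSymm := isSymm_diagonal _
  have hT : hyperbolicPairEmbedding k ModularGroup.T = upperUnipotent _ hE := by
    ext1
    rw [coe_hyperbolicPairEmbedding, ModularGroup.coe_T, coe_upperUnipotent, ← diagonal_one,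
      ← diagonal_zero]
    simp only [hyperbolicPairMatrix]
    congr 1 <;> congr 1 <;> funext i <;> by_cases hi : i = k <;> simp [hi]
  have hS : hyperbolicPairEmbedding k ModularGroup.S =
      upperUnipotent _ hE.neg * lowerUnipotent _ hE * upperUnipotent _ hE.neg := by
    ext1
    rw [Submonoid.coe_mul, Submonoid.coe_mul, coe_hyperbolicPairEmbedding, ModularGroup.coe_S,
      coe_upperUnipotent, coe_lowerUnipotent, ← diagonal_one, ← diagonal_zero]
    simp only [hyperbolicPairMatrix, fromBlocks_multiply, diagonal_neg, diagonal_mul_diagonal,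
      diagonal_add]
    congr 1 <;> congr 1 <;> funext i <;> by_cases hi : i = k <;> simp [hi]
  have hST : Subgroup.closure {ModularGroup.S, ModularGroup.T} ≤
      (Subgroup.closure (symmetricUnipotents l ℤ)).comap (hyperbolicPairEmbedding k) := by
    rw [Subgroup.closure_le]
    rintro _ (rfl | rfl)
    · rw [SetLike.mem_coe, Subgroup.mem_comap, hS]
      exact mul_mem (mul_mem (upperUnipotent_mem_closure _ _) (lowerUnipotent_mem_closure _ _))
        (upperUnipotent_mem_closure _ _)
    · rw [SetLike.mem_coe, Subgroup.mem_comap, hT]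
      exact upperUnipotent_mem_closure _ _
  exact hST (SpecialLinearGroup.SL2Z_generators ▸ Subgroup.mem_top g)

local notation "Sp₄" => symplecticGroup (Fin 2) ℤ

theorem isSymm_fin_two (a b c : ℤ) : (!![a, b; b, c] : Matrix (Fin 2) (Fin 2) ℤ).IsSymm :=
  IsSymm.ext fun i j => by fin_cases i <;> fin_cases j <;> rfl

theorem exists_SL2_snd_row_mul_eq_zero (a c : ℤ) :
    ∃ g : SL(2, ℤ), g 1 0 * a + g 1 1 * c = 0 := by
  obtain h | h := (Int.gcd a c).eq_zero_or_pos
  · obtain ⟨rfl, rfl⟩ := Int.gcd_eq_zero_iff.1 h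
    exact ⟨1, by simp⟩
  · obtain ⟨d, a', c', -, hcop, rfl, rfl⟩ := Int.exists_gcd_one' h
    obtain ⟨g, hg₀, hg₁⟩ :=
      (Int.isCoprime_iff_gcd_eq_one.2 hcop).symm.neg_left.exists_SL2_row 1
    exact ⟨g, by rw [hg₀, hg₁]; ring⟩

theorem exists_mem_closure_mulVec_eq_sumElim_zero (v : Fin 2 ⊕ Fin 2 → ℤ) :
    ∃ h ∈ Subgroup.closure (symmetricUnipotents (Fin 2) ℤ), ∃ x : Fin 2 → ℤ,
      (h : Matrix (Fin 2 ⊕ Fin 2) (Fin 2 ⊕ Fin 2) ℤ) *ᵥ v = Sum.elim x 0 := by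
  obtain ⟨g₀, hg₀⟩ := exists_SL2_snd_row_mul_eq_zero (v (.inl 0)) (v (.inr 0))
  obtain ⟨g₁, hg₁⟩ := exists_SL2_snd_row_mul_eq_zero (v (.inl 1)) (v (.inr 1))
  refine ⟨hyperbolicPairEmbedding 1 g₁ * hyperbolicPairEmbedding 0 g₀, mul_mem
    (hyperbolicPairEmbedding_mem_closure 1 g₁) (hyperbolicPairEmbedding_mem_closure 0 g₀), ?_⟩
  rw [← Sum.elim_comp_inl_inr v]
  simp only [Submonoid.coe_mul, ← mulVec_mulVec, coe_hyperbolicPairEmbedding,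
    hyperbolicPairMatrix_mulVec]
  exact ⟨_, congrArg _ (funext fun i => by fin_cases i <;> simp [hg₀, hg₁])⟩

theorem isCoprime_of_mulVec_single_eq_sumElim_zero (M : Sp₄) {x : Fin 2 → ℤ}
    (hx : (M : Matrix (Fin 2 ⊕ Fin 2) (Fin 2 ⊕ Fin 2) ℤ) *ᵥ Pi.single (.inl 0) 1 =
      Sum.elim x 0) :
    IsCoprime (x 0) (x 1) := by
  have h := congrFun (congrArg ((M⁻¹ : Sp₄).1 *ᵥ ·) hx) (.inl 0)
  rw [mulVec_mulVec, ← Submonoid.coe_mul, inv_mul_cancel, Submonoid.coe_one, one_mulVec] at h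
  exact ⟨_, _, by
    simpa [mulVec, dotProduct, Fintype.sum_sum_type, Fin.sum_univ_two] using h.symm⟩

theorem exists_mem_closure_mulVec_eq_single_of_isCoprime {x : Fin 2 → ℤ}
    (hx : IsCoprime (x 0) (x 1)) :
    ∃ h ∈ Subgroup.closure (symmetricUnipotents (Fin 2) ℤ),
      (h : Matrix (Fin 2 ⊕ Fin 2) (Fin 2 ⊕ Fin 2) ℤ) *ᵥ Sum.elim x 0 =
        Pi.single (.inl 0) 1 := by
  obtain ⟨u, v, huv⟩ := hx
  let g₀ : SL(2, ℤ) := ⟨!![u, v; -x 1, x 0], by rw [det_fin_two_of]; linear_combination huv⟩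
  let g₁ : SL(2, ℤ) := ⟨!![x 0, -x 1; v, u], by rw [det_fin_two_of]; linear_combination huv⟩
  -- The first unipotent copies `x` into the `f`-coordinates in reverse order; the coordinate
  -- pairs are then `x` and `(x 1, x 0)`, which `g₀` and `g₁` send to `(1, 0)` and `(0, 1)`,
  -- and the last unipotent maps the resulting `e₁ + f₂` to `e₁`.
  refine ⟨lowerUnipotent _ (isSymm_fin_two 0 (-1) 0) * hyperbolicPairEmbedding 1 g₁ *
    hyperbolicPairEmbedding 0 g₀ * lowerUnipotent _ (isSymm_fin_two 0 1 0), ?_, ?_⟩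
  · exact mul_mem (mul_mem (mul_mem (lowerUnipotent_mem_closure _ _)
      (hyperbolicPairEmbedding_mem_closure 1 g₁)) (hyperbolicPairEmbedding_mem_closure 0 g₀))
      (lowerUnipotent_mem_closure _ _)
  · simp only [Submonoid.coe_mul, ← mulVec_mulVec, lowerUnipotent_mulVec,
      coe_hyperbolicPairEmbedding, hyperbolicPairMatrix_mulVec]
    ext (i | i) <;> fin_cases i <;> simp [g₀, g₁, vecHead, vecTail] <;> grind

theorem exists_mem_closure_mul_mulVec_single_inl (M : Sp₄) :
    ∃ h ∈ Subgroup.closure (symmetricUnipotents (Fin 2) ℤ),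
      ((h * M : Sp₄) : Matrix (Fin 2 ⊕ Fin 2) (Fin 2 ⊕ Fin 2) ℤ) *ᵥ Pi.single (.inl 0) 1 =
        Pi.single (.inl 0) 1 := by
  obtain ⟨h₁, hh₁, x, hx⟩ :=
    exists_mem_closure_mulVec_eq_sumElim_zero (M.1 *ᵥ Pi.single (.inl 0) 1)
  have hx' : ((h₁ * M : Sp₄) : Matrix (Fin 2 ⊕ Fin 2) (Fin 2 ⊕ Fin 2) ℤ) *ᵥ
      Pi.single (.inl 0) 1 = Sum.elim x 0 := by
    rw [Submonoid.coe_mul, ← mulVec_mulVec, hx]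
  obtain ⟨h₂, hh₂, hx₂⟩ := exists_mem_closure_mulVec_eq_single_of_isCoprime
    (isCoprime_of_mulVec_single_eq_sumElim_zero _ hx')
  refine ⟨h₂ * h₁, mul_mem hh₂ hh₁, ?_⟩
  rw [mul_assoc, Submonoid.coe_mul, ← mulVec_mulVec, hx', hx₂]

theorem exists_mem_closure_fix_single_inl_mulVec_eq_single_inr {x y : Fin 2 → ℤ}
    (hy : y 0 = 1) :
    ∃ h ∈ Subgroup.closure (symmetricUnipotents (Fin 2) ℤ),
      (h : Matrix (Fin 2 ⊕ Fin 2) (Fin 2 ⊕ Fin 2) ℤ) *ᵥ Pi.single (.inl 0) 1 =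
        Pi.single (.inl 0) 1 ∧
      (h : Matrix (Fin 2 ⊕ Fin 2) (Fin 2 ⊕ Fin 2) ℤ) *ᵥ Sum.elim x y =
        Pi.single (.inr 0) 1 := by
  refine ⟨upperUnipotent _ (isSymm_fin_two 0 (y 1) 0) * hyperbolicPairEmbedding 1 ModularGroup.S *
    upperUnipotent _ (isSymm_fin_two (-x 0 + x 1 * y 1) (-x 1) 0), mul_mem (mul_mem
      (upperUnipotent_mem_closure _ _) (hyperbolicPairEmbedding_mem_closure 1 _))
      (upperUnipotent_mem_closure _ _), ?_, ?_⟩ <;>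
  · simp only [← Sum.elim_single_zero, ← Sum.elim_zero_single, Submonoid.coe_mul,
      ← mulVec_mulVec, upperUnipotent_mulVec, coe_hyperbolicPairEmbedding,
      hyperbolicPairMatrix_mulVec]
    ext (i | i) <;> fin_cases i <;> simp [vecHead, vecTail, hy]

theorem exists_mem_closure_mul_fix_single_inl_single_inr (M : Sp₄)
    (he : (M : Matrix (Fin 2 ⊕ Fin 2) (Fin 2 ⊕ Fin 2) ℤ) *ᵥ Pi.single (.inl 0) 1 =
      Pi.single (.inl 0) 1) :
    ∃ h ∈ Subgroup.closure (symmetricUnipotents (Fin 2) ℤ),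
      ((h * M : Sp₄) : Matrix (Fin 2 ⊕ Fin 2) (Fin 2 ⊕ Fin 2) ℤ) *ᵥ Pi.single (.inl 0) 1 =
        Pi.single (.inl 0) 1 ∧
      ((h * M : Sp₄) : Matrix (Fin 2 ⊕ Fin 2) (Fin 2 ⊕ Fin 2) ℤ) *ᵥ Pi.single (.inr 0) 1 =
        Pi.single (.inr 0) 1 := by
  have hy : M.1 (.inr 0) (.inr 0) = 1 := by
    simpa using congrFun (row_inr_eq_single_of_mulVec_single_inl M.2 he) (.inr 0)
  obtain ⟨h, hh, hfix, hf⟩ := exists_mem_closure_fix_single_inl_mulVec_eq_single_inr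
    (x := fun i => M.1 (.inl i) (.inr 0))
    (y := fun i => M.1 (.inr i) (.inr 0)) hy
  refine ⟨h, hh, ?_, ?_⟩ <;> rw [Submonoid.coe_mul, ← mulVec_mulVec]
  · rw [he, hfix]
  · rw [mulVec_single_one, ← Sum.elim_comp_inl_inr (M.1.col _)]
    exact hf

theorem exists_eq_hyperbolicPairEmbedding_of_fix (M : Sp₄)
    (he : (M : Matrix (Fin 2 ⊕ Fin 2) (Fin 2 ⊕ Fin 2) ℤ) *ᵥ Pi.single (.inl 0) 1 =
      Pi.single (.inl 0) 1)
    (hf : (M : Matrix (Fin 2 ⊕ Fin 2) (Fin 2 ⊕ Fin 2) ℤ) *ᵥ Pi.single (.inr 0) 1 =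
      Pi.single (.inr 0) 1) :
    ∃ g, M = hyperbolicPairEmbedding 1 g := by
  have he' := row_inr_eq_single_of_mulVec_single_inl M.2 he
  have hf' := row_inl_eq_single_of_mulVec_single_inr M.2 hf
  simp only [mulVec_single_one, funext_iff, col_apply, row_apply] at he hf he' hf'
  let g : Matrix (Fin 2) (Fin 2) ℤ := !![M.1 (.inl 1) (.inl 1), M.1 (.inl 1) (.inr 1);
    M.1 (.inr 1) (.inl 1), M.1 (.inr 1) (.inr 1)]
  have hM : M.1 = hyperbolicPairMatrix 1 g := by
    ext (i | i) (j | j) <;> fin_cases i <;> fin_cases j <;>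
      simp [hyperbolicPairMatrix, g, he, hf, he', hf']
  exact ⟨⟨g, (hyperbolicPairMatrix_mem_symplecticGroup_iff 1 g).1 (hM ▸ M.2)⟩,
    Subtype.ext hM⟩

theorem closure_symmetricUnipotents_eq_top :
    Subgroup.closure (symmetricUnipotents (Fin 2) ℤ) = ⊤ := by
  refine eq_top_iff.2 fun M _ => ?_
  obtain ⟨h₁, hh₁, he₁⟩ := exists_mem_closure_mul_mulVec_single_inl M
  obtain ⟨h₂, hh₂, he₂, hf₂⟩ := exists_mem_closure_mul_fix_single_inl_single_inr _ he₁
  obtain ⟨g, hg⟩ := exists_eq_hyperbolicPairEmbedding_of_fix _ he₂ hf₂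
  have hM : M = (h₂ * h₁)⁻¹ * hyperbolicPairEmbedding 1 g := by rw [← hg]; group
  rw [hM]
  exact mul_mem (inv_mem (mul_mem hh₂ hh₁)) (hyperbolicPairEmbedding_mem_closure 1 g)

def spA : Sp₄ := lowerUnipotent _ (isSymm_fin_two 1 0 0)
def spB : Sp₄ := upperUnipotent _ (isSymm_fin_two (-1) 1 (-1))
def spC : Sp₄ := lowerUnipotent _ (isSymm_fin_two 0 0 1)
def spD : Sp₄ := upperUnipotent _ (isSymm_fin_two 0 0 (-1))
def spE : Sp₄ := lowerUnipotent _ (isSymm_fin_two 1 1 1)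

theorem coe_spA : (spA : Matrix (Fin 2 ⊕ Fin 2) (Fin 2 ⊕ Fin 2) ℤ) = r A := by decide
theorem coe_spB : (spB : Matrix (Fin 2 ⊕ Fin 2) (Fin 2 ⊕ Fin 2) ℤ) = r B := by decide
theorem coe_spC : (spC : Matrix (Fin 2 ⊕ Fin 2) (Fin 2 ⊕ Fin 2) ℤ) = r C := by decide
theorem coe_spD : (spD : Matrix (Fin 2 ⊕ Fin 2) (Fin 2 ⊕ Fin 2) ℤ) = r D := by decide
theorem coe_spE : (spE : Matrix (Fin 2 ⊕ Fin 2) (Fin 2 ⊕ Fin 2) ℤ) = r E := by decide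

theorem lowerUnipotent_eq_mul_zpow (S : Matrix (Fin 2) (Fin 2) ℤ) (hS : S.IsSymm) :
    lowerUnipotent S hS = spA ^ (S 0 0 - S 0 1) * spE ^ S 0 1 * spC ^ (S 1 1 - S 0 1) := by
  simp only [spA, spC, spE, lowerUnipotent_zpow, lowerUnipotent_mul]
  ext1
  simp only [coe_lowerUnipotent]
  congr 1
  ext i j
  fin_cases i <;> fin_cases j <;> simp [hS.apply 0 1]

theorem upperUnipotent_eq_mul_zpow (S : Matrix (Fin 2) (Fin 2) ℤ) (hS : S.IsSymm) :
    upperUnipotent S hS = upperUnipotent _ (isSymm_fin_two 1 0 0) ^ (S 0 0 + S 0 1) *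
      spB ^ S 0 1 * spD ^ (-(S 0 1 + S 1 1)) := by
  simp only [spB, spD, upperUnipotent_zpow, upperUnipotent_mul]
  ext1
  simp only [coe_upperUnipotent]
  congr 1
  ext i j
  fin_cases i <;> fin_cases j <;> simp [hS.apply 0 1]

theorem upperUnipotent_eq_conj :
    upperUnipotent _ (isSymm_fin_two 1 0 0) =
      (spD * spC * spB * spA)⁻¹ * spE⁻¹ * (spD * spC * spB * spA) := by
  rw [mul_assoc, eq_inv_mul_iff_mul_eq, spE, ← lowerUnipotent_neg]
  ext1
  simp only [Submonoid.coe_mul, spA, spB, spC, spD, coe_lowerUnipotent, coe_upperUnipotent]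
  decide

theorem eq_top_of_generators_mem (H : Subgroup Sp₄) (hA : spA ∈ H) (hB : spB ∈ H)
    (hC : spC ∈ H) (hD : spD ∈ H) (hE : spE ∈ H) : H = ⊤ := by
  have hU : upperUnipotent _ (isSymm_fin_two 1 0 0) ∈ H := by
    have hW := mul_mem (mul_mem (mul_mem hD hC) hB) hA
    rw [upperUnipotent_eq_conj]
    exact mul_mem (mul_mem (inv_mem hW) (inv_mem hE)) hW
  rw [eq_top_iff, ← closure_symmetricUnipotents_eq_top, Subgroup.closure_le]
  rintro _ ⟨S, hS, rfl | rfl⟩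
  · rw [SetLike.mem_coe, lowerUnipotent_eq_mul_zpow]
    exact mul_mem (mul_mem (zpow_mem hA _) (zpow_mem hE _)) (zpow_mem hC _)
  · rw [SetLike.mem_coe, upperUnipotent_eq_mul_zpow]
    exact mul_mem (mul_mem (zpow_mem hU _) (zpow_mem hB _)) (zpow_mem hD _)

/-- The five matrices `A`, `B`, `C`, `D`, `E` generate the full symplectic group `Sp(4,ℤ)`. -/
theorem five_matrices_generate :
    Subgroup.closure {g : Matrix.symplecticGroup (Fin 2) ℤ |
        (g : Matrix (Fin 2 ⊕ Fin 2) (Fin 2 ⊕ Fin 2) ℤ) = r A ∨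
        (g : Matrix (Fin 2 ⊕ Fin 2) (Fin 2 ⊕ Fin 2) ℤ) = r B ∨
        (g : Matrix (Fin 2 ⊕ Fin 2) (Fin 2 ⊕ Fin 2) ℤ) = r C ∨
        (g : Matrix (Fin 2 ⊕ Fin 2) (Fin 2 ⊕ Fin 2) ℤ) = r D ∨
        (g : Matrix (Fin 2 ⊕ Fin 2) (Fin 2 ⊕ Fin 2) ℤ) = r E} = ⊤ := by
  refine eq_top_of_generators_mem _ ?_ ?_ ?_ ?_ ?_ <;> apply Subgroup.subset_closure
  · exact Or.inl coe_spA
  · exact Or.inr <| Or.inl coe_spB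
  · exact Or.inr <| Or.inr <| Or.inl coe_spC
  · exact Or.inr <| Or.inr <| Or.inr <| Or.inl coe_spD
  · exact Or.inr <| Or.inr <| Or.inr <| Or.inr coe_spE

end GenusTwo
end

section
/- The matrix identity E·D·C²·D⁻¹·E⁻¹ = (C·D)³·(A·B·C·D)⁻⁵·(A·B)⁻³·(D·A)² holds; in particular E·D·C²·D⁻¹·E⁻¹ belongs to the subgroup generated by A, B, C, D. -/
namespace GenusTwo

open Matrix in
/-- The subgroup of `GL(4,ℤ)` generated by the matrices `A`, `B`, `C`, `D`. -/
def ΓGL : Subgroup (GL (Fin 4) ℤ) :=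
  Subgroup.closure {g | (g : Matrix (Fin 4) (Fin 4) ℤ) = A ∨
    (g : Matrix (Fin 4) (Fin 4) ℤ) = B ∨
    (g : Matrix (Fin 4) (Fin 4) ℤ) = C ∨
    (g : Matrix (Fin 4) (Fin 4) ℤ) = D}

/-- `A` as an element of `GL(4,ℤ)`. -/
def a : GL (Fin 4) ℤ :=
  ⟨A, !![1,0,0,0; 0,1,0,0; -1,0,1,0; 0,0,0,1], by decide, by decide⟩

/-- `B` as an element of `GL(4,ℤ)`. -/
def b : GL (Fin 4) ℤ :=
  ⟨B, !![1,0,1,-1; 0,1,-1,1; 0,0,1,0; 0,0,0,1], by decide, by decide⟩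

/-- `C` as an element of `GL(4,ℤ)`. -/
def c : GL (Fin 4) ℤ :=
  ⟨C, !![1,0,0,0; 0,1,0,0; 0,0,1,0; 0,-1,0,1], by decide, by decide⟩

/-- `D` as an element of `GL(4,ℤ)`. -/
def d : GL (Fin 4) ℤ :=
  ⟨D, !![1,0,0,0; 0,1,0,1; 0,0,1,0; 0,0,0,1], by decide, by decide⟩

/-- `E·D·C²·D⁻¹·E⁻¹ = (C·D)³·(A·B·C·D)⁻⁵·(A·B)⁻³·(D·A)²`; in particular `E·D·C²·D⁻¹·E⁻¹`
belongs to the subgroup generated by `A`, `B`, `C`, `D`. -/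
theorem edc_identity :
    E * D * C ^ 2 * D⁻¹ * E⁻¹ =
      (C * D) ^ 3 * ((A * B * C * D) ^ 5)⁻¹ * ((A * B) ^ 3)⁻¹ * (D * A) ^ 2 ∧
    ∃ g ∈ ΓGL, (g : Matrix (Fin 4) (Fin 4) ℤ) = E * D * C ^ 2 * D⁻¹ * E⁻¹ := by
  have hD : D⁻¹ = !![1,0,0,0; 0,1,0,1; 0,0,1,0; 0,0,0,1] :=
    Matrix.inv_eq_right_inv (by decide)
  have hE : E⁻¹ = !![1,0,0,0; 0,1,0,0; -1,-1,1,0; -1,-1,0,1] :=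
    Matrix.inv_eq_right_inv (by decide)
  have h5 : ((A * B * C * D) ^ 5)⁻¹ = (A * B * C * D) ^ 5 :=
    Matrix.inv_eq_right_inv (by decide)
  have h3 : ((A * B) ^ 3)⁻¹ = (A * B) ^ 3 :=
    Matrix.inv_eq_right_inv (by decide)
  have hmain : E * D * C ^ 2 * D⁻¹ * E⁻¹ =
      (C * D) ^ 3 * ((A * B * C * D) ^ 5)⁻¹ * ((A * B) ^ 3)⁻¹ * (D * A) ^ 2 := by
    rw [hD, hE, h5, h3]; decide
  refine ⟨hmain, ?_⟩
  have ha : a ∈ ΓGL := Subgroup.subset_closure (Or.inl rfl)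
  have hb : b ∈ ΓGL := Subgroup.subset_closure (Or.inr (Or.inl rfl))
  have hc : c ∈ ΓGL := Subgroup.subset_closure (Or.inr (Or.inr (Or.inl rfl)))
  have hd : d ∈ ΓGL := Subgroup.subset_closure (Or.inr (Or.inr (Or.inr rfl)))
  refine ⟨(c * d) ^ 3 * ((a * b * c * d) ^ 5)⁻¹ * ((a * b) ^ 3)⁻¹ * (d * a) ^ 2, ?_, ?_⟩
  · exact mul_mem (mul_mem (mul_mem (pow_mem (mul_mem hc hd) 3)
      (inv_mem (pow_mem (mul_mem (mul_mem (mul_mem ha hb) hc) hd) 5)))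
      (inv_mem (pow_mem (mul_mem ha hb) 3))) (pow_mem (mul_mem hd ha) 2)
  · rw [hmain]
    simp only [Units.val_mul, Units.val_pow_eq_pow_val, Matrix.coe_units_inv]
    rfl

end GenusTwo
end

section
/- The matrix identity (E·D·C·B·A²·B⁻¹·C⁻¹·D⁻¹·E⁻¹)⁻¹ = (E·D·C·B²·C⁻¹·D⁻¹·E⁻¹)·(A²·(C·D)³·(A·B·C·D)⁵) holds. -/
namespace GenusTwo

lemma mul_fin_four (a11 a12 a13 a14 a21 a22 a23 a24 a31 a32 a33 a34 a41 a42 a43 a44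
    b11 b12 b13 b14 b21 b22 b23 b24 b31 b32 b33 b34 b41 b42 b43 b44 : ℤ) :
    !![a11,a12,a13,a14; a21,a22,a23,a24; a31,a32,a33,a34; a41,a42,a43,a44] *
      !![b11,b12,b13,b14; b21,b22,b23,b24; b31,b32,b33,b34; b41,b42,b43,b44] =
    !![a11*b11+a12*b21+a13*b31+a14*b41, a11*b12+a12*b22+a13*b32+a14*b42,
       a11*b13+a12*b23+a13*b33+a14*b43, a11*b14+a12*b24+a13*b34+a14*b44;
       a21*b11+a22*b21+a23*b31+a24*b41, a21*b12+a22*b22+a23*b32+a24*b42,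
       a21*b13+a22*b23+a23*b33+a24*b43, a21*b14+a22*b24+a23*b34+a24*b44;
       a31*b11+a32*b21+a33*b31+a34*b41, a31*b12+a32*b22+a33*b32+a34*b42,
       a31*b13+a32*b23+a33*b33+a34*b43, a31*b14+a32*b24+a33*b34+a34*b44;
       a41*b11+a42*b21+a43*b31+a44*b41, a41*b12+a42*b22+a43*b32+a44*b42,
       a41*b13+a42*b23+a43*b33+a44*b43, a41*b14+a42*b24+a43*b34+a44*b44] := by
  ext i j
  fin_cases i <;> fin_cases j <;>
    simp [Matrix.mul_apply, Fin.sum_univ_four, Matrix.vecHead, Matrix.vecTail]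


lemma one_fin_four' :
    (!![1,0,0,0; 0,1,0,0; 0,0,1,0; 0,0,0,1] : Matrix (Fin 4) (Fin 4) ℤ) = 1 := by
  ext i j
  fin_cases i <;> fin_cases j <;> simp [Matrix.one_apply, Matrix.vecHead, Matrix.vecTail]

lemma hB : B⁻¹ = !![1,0,1,-1; 0,1,-1,1; 0,0,1,0; 0,0,0,1] := by
  apply Matrix.inv_eq_right_inv
  norm_num [B, mul_fin_four, one_fin_four']

lemma hC : C⁻¹ = !![1,0,0,0; 0,1,0,0; 0,0,1,0; 0,-1,0,1] := by
  apply Matrix.inv_eq_right_inv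
  norm_num [C, mul_fin_four, one_fin_four']

lemma hD : D⁻¹ = !![1,0,0,0; 0,1,0,1; 0,0,1,0; 0,0,0,1] := by
  apply Matrix.inv_eq_right_inv
  norm_num [D, mul_fin_four, one_fin_four']

lemma hE : E⁻¹ = !![1,0,0,0; 0,1,0,0; -1,-1,1,0; -1,-1,0,1] := by
  apply Matrix.inv_eq_right_inv
  norm_num [E, mul_fin_four, one_fin_four']

lemma hMinv : (!![1,0,-2,0; 0,1,0,0; 0,0,1,0; 0,0,0,1] : Matrix (Fin 4) (Fin 4) ℤ)⁻¹ =
    !![1,0,2,0; 0,1,0,0; 0,0,1,0; 0,0,0,1] := by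
  apply Matrix.inv_eq_right_inv
  norm_num [mul_fin_four, one_fin_four']

lemma hM : E * D * C * B * A ^ 2 * B⁻¹ * C⁻¹ * D⁻¹ * E⁻¹ =
    !![1,0,-2,0; 0,1,0,0; 0,0,1,0; 0,0,0,1] := by
  rw [hB, hC, hD, hE]
  norm_num [A, B, C, D, E, pow_succ, mul_fin_four]

/-- `(E·D·C·B·A²·B⁻¹·C⁻¹·D⁻¹·E⁻¹)⁻¹ = (E·D·C·B²·C⁻¹·D⁻¹·E⁻¹)·(A²·(C·D)³·(A·B·C·D)⁵)`. -/
theorem inverse_identity :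
    (E * D * C * B * A ^ 2 * B⁻¹ * C⁻¹ * D⁻¹ * E⁻¹)⁻¹ =
      (E * D * C * B ^ 2 * C⁻¹ * D⁻¹ * E⁻¹) * (A ^ 2 * (C * D) ^ 3 * (A * B * C * D) ^ 5) := by
  rw [hM, hMinv, hC, hD, hE]
  norm_num [A, B, C, D, E, pow_succ, mul_fin_four]

end GenusTwo
end

section
/- The Igusa theta group Γ_{2,θ} is not contained in Γ; in particular Γ_{2,θ} ≠ Γ. -/
open Matrix

namespace GenusTwo

/-- Igusa's theta group `Γ_{2,θ}`: all symplectic matrices whose blocks `P, Q, R, S`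
(in the decomposition `[[P,Q],[R,S]]`) satisfy that `P·Qᵀ` and `R·Sᵀ` have even
diagonal entries. -/
def thetaGroup : Set (Matrix.symplecticGroup (Fin 2) ℤ) :=
  {g | (∀ i, Even (((g : Matrix (Fin 2 ⊕ Fin 2) (Fin 2 ⊕ Fin 2) ℤ).toBlocks₁₁ *
          ((g : Matrix (Fin 2 ⊕ Fin 2) (Fin 2 ⊕ Fin 2) ℤ).toBlocks₁₂)ᵀ) i i)) ∧
       (∀ i, Even (((g : Matrix (Fin 2 ⊕ Fin 2) (Fin 2 ⊕ Fin 2) ℤ).toBlocks₂₁ *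
          ((g : Matrix (Fin 2 ⊕ Fin 2) (Fin 2 ⊕ Fin 2) ℤ).toBlocks₂₂)ᵀ) i i))}


/-- Witness matrix: block diagonal with `P = [[1,1],[0,1]]` and `S = (Pᵀ)⁻¹`. -/
def M0 : Matrix (Fin 4) (Fin 4) ℤ := !![1,1,0,0; 0,1,0,0; 0,0,1,0; 0,0,-1,1]

/-- A quadratic form over `ZMod 2` preserved by the reductions of `A`, `B`, `C`, `D`. -/
def q (x : Fin 2 ⊕ Fin 2 → ZMod 2) : ZMod 2 :=
  x (.inl 0) * x (.inr 0) + x (.inl 1) * x (.inr 1) + x (.inl 1) + x (.inr 0) + x (.inr 1)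

/-- The subgroup of `Sp(4, ZMod 2)` preserving the quadratic form `q`. -/
def K : Subgroup (Matrix.symplecticGroup (Fin 2) (ZMod 2)) where
  carrier := {g | ∀ x, q ((g : Matrix (Fin 2 ⊕ Fin 2) (Fin 2 ⊕ Fin 2) (ZMod 2)).mulVec x) = q x}
  mul_mem' := by
    intro a b ha hb x
    show q (((a : Matrix (Fin 2 ⊕ Fin 2) (Fin 2 ⊕ Fin 2) (ZMod 2)) *
      (b : Matrix (Fin 2 ⊕ Fin 2) (Fin 2 ⊕ Fin 2) (ZMod 2))).mulVec x) = q x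
    rw [← Matrix.mulVec_mulVec, ha, hb]
  one_mem' := by
    intro x
    show q ((1 : Matrix _ _ (ZMod 2)).mulVec x) = q x
    rw [Matrix.one_mulVec]
  inv_mem' := by
    intro g hg x
    have hone : ((g : Matrix (Fin 2 ⊕ Fin 2) (Fin 2 ⊕ Fin 2) (ZMod 2)) *
        ((g⁻¹ : Matrix.symplecticGroup (Fin 2) (ZMod 2)) :
          Matrix (Fin 2 ⊕ Fin 2) (Fin 2 ⊕ Fin 2) (ZMod 2))) = 1 := by
      have h1 : g * g⁻¹ = 1 := mul_inv_cancel g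
      calc _ = ((g * g⁻¹ : Matrix.symplecticGroup (Fin 2) (ZMod 2)) :
          Matrix (Fin 2 ⊕ Fin 2) (Fin 2 ⊕ Fin 2) (ZMod 2)) := rfl
        _ = 1 := by rw [h1]; rfl
    calc q (((g⁻¹ : Matrix.symplecticGroup (Fin 2) (ZMod 2)) :
          Matrix (Fin 2 ⊕ Fin 2) (Fin 2 ⊕ Fin 2) (ZMod 2)).mulVec x)
        = q ((g : Matrix (Fin 2 ⊕ Fin 2) (Fin 2 ⊕ Fin 2) (ZMod 2)).mulVec
            (((g⁻¹ : Matrix.symplecticGroup (Fin 2) (ZMod 2)) :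
          Matrix (Fin 2 ⊕ Fin 2) (Fin 2 ⊕ Fin 2) (ZMod 2)).mulVec x)) := (hg _).symm
      _ = q x := by rw [Matrix.mulVec_mulVec, hone, Matrix.one_mulVec]

lemma gamma_le_comap : Γ ≤ K.comap sred := by
  apply (Subgroup.closure_le _).mpr
  intro g hg
  simp only [SetLike.mem_coe, Subgroup.mem_comap]
  show ∀ x, q (((sred g : Matrix (Fin 2 ⊕ Fin 2) (Fin 2 ⊕ Fin 2) (ZMod 2))).mulVec x) = q x
  have hc : (sred g : Matrix (Fin 2 ⊕ Fin 2) (Fin 2 ⊕ Fin 2) (ZMod 2)) =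
      ((g : Matrix (Fin 2 ⊕ Fin 2) (Fin 2 ⊕ Fin 2) ℤ).map (Int.cast : ℤ → ZMod 2)) := rfl
  rw [hc]
  rcases hg with h | h | h | h <;> rw [h] <;> decide

/-- The witness element of `Sp(4,ℤ)`. -/
def g0 : Matrix.symplecticGroup (Fin 2) ℤ :=
  ⟨r M0, by rw [SymplecticGroup.mem_iff]; decide⟩

lemma g0_mem_theta : g0 ∈ thetaGroup := by
  constructor
  · intro i
    have h : (g0 : Matrix (Fin 2 ⊕ Fin 2) (Fin 2 ⊕ Fin 2) ℤ).toBlocks₁₁ *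
        ((g0 : Matrix (Fin 2 ⊕ Fin 2) (Fin 2 ⊕ Fin 2) ℤ).toBlocks₁₂)ᵀ = 0 := by
      show (r M0).toBlocks₁₁ * ((r M0).toBlocks₁₂)ᵀ = 0
      decide
    rw [h]
    simp
  · intro i
    have h : (g0 : Matrix (Fin 2 ⊕ Fin 2) (Fin 2 ⊕ Fin 2) ℤ).toBlocks₂₁ *
        ((g0 : Matrix (Fin 2 ⊕ Fin 2) (Fin 2 ⊕ Fin 2) ℤ).toBlocks₂₂)ᵀ = 0 := by
      show (r M0).toBlocks₂₁ * ((r M0).toBlocks₂₂)ᵀ = 0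
      decide
    rw [h]
    simp

lemma g0_not_mem_gamma : g0 ∉ Γ := by
  intro h
  have h1 : sred g0 ∈ K := Subgroup.mem_comap.mp (gamma_le_comap h)
  have h2 : ∀ x, q (((r M0).map (Int.cast : ℤ → ZMod 2)).mulVec x) = q x := h1
  exact absurd h2 (by decide)

/-- The Igusa theta group `Γ_{2,θ}` is not contained in `Γ`; in particular
`Γ_{2,θ} ≠ Γ`. -/
theorem theta_not_subset_gamma :
    ¬ thetaGroup ⊆ (Γ : Set (Matrix.symplecticGroup (Fin 2) ℤ)) ∧
    thetaGroup ≠ (Γ : Set (Matrix.symplecticGroup (Fin 2) ℤ)) := by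
  have hns : ¬ thetaGroup ⊆ (Γ : Set (Matrix.symplecticGroup (Fin 2) ℤ)) := by
    intro hsub
    exact g0_not_mem_gamma (hsub g0_mem_theta)
  exact ⟨hns, fun he => hns (he ▸ Set.Subset.refl _)⟩

end GenusTwo
end

section
/- Let K be a field of characteristic zero, let t₂ ∈ K, and let s₁₁, s₁₂, s₂₁, s₂₂, s₃₁, s₃₂, s₃₃, s₃₄, s₄₁, s₄₂, s₄₃, s₄₄ ∈ K. Set S = [[s₁₁,s₁₂,0,0],[s₂₁,s₂₂,0,0],[s₃₁,s₃₂,s₃₃,s₃₄],[s₄₁,s₄₂,s₄₃,s₄₄]], Ω = [[0,0,0,4/3],[0,0,4,0],[0,-4,0,(4/3)t₂],[-4/3,0,-(4/3)t₂,0]], and Φ = [[0,0,1,0],[0,0,0,1],[-1,0,0,0],[0,-1,0,0]]. Then S·Ω·Sᵀ = Φ holds if and only if both S₁·Ω₂·S₄ᵀ = I₂ and s₄₂s₂₁ − s₄₁s₂₂ + s₃₂s₁₁ − s₃₁s₁₂ = t₂/4, where S₁ = [[s₁₁,s₁₂],[s₂₁,s₂₂]], S₄ = [[s₃₃,s₃₄],[s₄₃,s₄₄]],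 Ω₂ = [[0,4/3],[4,0]], and I₂ is the 2×2 identity matrix. -/
/-!
In `2 × 2` blocks, `S = [[S₁, 0], [S₃, S₄]]`, `Ω = [[0, Ω₂], [-Ω₂ᵀ, T]]` and `Φ = [[0, 1], [-1, 0]]`,
so `S Ω Sᵀ` has blocks `0`, `X := S₁ Ω₂ S₄ᵀ`, `-Xᵀ` and `N := S₃ Ω₂ S₄ᵀ - (S₃ Ω₂ S₄ᵀ)ᵀ + S₄ T S₄ᵀ`,
and the equation `S Ω Sᵀ = Φ` says `X = 1 ∧ N = 0`. Once `X = 1`, `S₁` is invertible and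
`S₄ᵀ S₁ = Ω₂⁻¹`, so the congruent matrix `S₁ᵀ N S₁ = S₁ᵀ S₃ - (S₁ᵀ S₃)ᵀ + Ω₂⁻ᵀ T Ω₂⁻¹` is a multiple
of `[[0, 1], [-1, 0]]`, with coefficient `s₄₂s₂₁ − s₄₁s₂₂ + s₃₂s₁₁ − s₃₁s₁₂ - t₂/4`.
-/

open Matrix

namespace Matrix

variable {m n R : Type*} [CommRing R]

theorem fromBlocks_zero₁₂_mul_mul_transpose [Fintype m] [Fintype n]
    (A : Matrix m m R) (C : Matrix n m R) (D : Matrix n n R) (B : Matrix m n R)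
    (T : Matrix n n R) :
    fromBlocks A 0 C D * fromBlocks 0 B (-Bᵀ) T * (fromBlocks A 0 C D)ᵀ =
      fromBlocks 0 (A * B * Dᵀ) (-(A * B * Dᵀ)ᵀ)
        (C * B * Dᵀ - (C * B * Dᵀ)ᵀ + D * T * Dᵀ) := by
  simp only [fromBlocks_multiply, fromBlocks_transpose, transpose_mul, transpose_zero,
    Matrix.mul_zero, Matrix.zero_mul, Matrix.mul_neg, Matrix.neg_mul, zero_add, add_zero,
    transpose_transpose, Matrix.add_mul, Matrix.mul_assoc]
  abel_nf

theorem transpose_mul_congr_mul_of_mul_mul_eq_one [Fintype n] [DecidableEq n]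
    {A B D : Matrix n n R} (C T : Matrix n n R) (h : B * Dᵀ * A = 1) :
    Aᵀ * (C * B * Dᵀ - (C * B * Dᵀ)ᵀ + D * T * Dᵀ) * A =
      Aᵀ * C - (Aᵀ * C)ᵀ + (Dᵀ * A)ᵀ * T * (Dᵀ * A) := by
  have hC : Aᵀ * (C * B * Dᵀ) * A = Aᵀ * C := by
    rw [Matrix.mul_assoc, Matrix.mul_assoc C, Matrix.mul_assoc C, h, Matrix.mul_one]
  have hCt : Aᵀ * (C * B * Dᵀ)ᵀ * A = (Aᵀ * C)ᵀ := by
    simpa only [transpose_mul, transpose_transpose, Matrix.mul_assoc] using congrArg transpose hC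
  rw [Matrix.mul_add, Matrix.add_mul, Matrix.mul_sub, Matrix.sub_mul, hC, hCt]
  simp only [transpose_mul, transpose_transpose, Matrix.mul_assoc]

theorem sub_transpose_fin_two (M : Matrix (Fin 2) (Fin 2) R) :
    M - Mᵀ = (M 0 1 - M 1 0) • !![0, 1; -1, 0] := by
  ext i j; fin_cases i <;> fin_cases j <;> simp

end Matrix

theorem block_symplectic_lowerRight_eq_zero_iff {K : Type*} [Field K] [CharZero K] (t : K)
    {A C D : Matrix (Fin 2) (Fin 2) K} (h : A * !![0, 4/3; 4, 0] * Dᵀ = 1) :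
    C * !![0, 4/3; 4, 0] * Dᵀ - (C * !![0, 4/3; 4, 0] * Dᵀ)ᵀ
        + D * !![0, 4/3 * t; -(4/3 * t), 0] * Dᵀ = 0 ↔
      (Aᵀ * C) 0 1 - (Aᵀ * C) 1 0 = t / 4 := by
  set Ω₂ : Matrix (Fin 2) (Fin 2) K := !![0, 4/3; 4, 0]
  set Ω₂inv : Matrix (Fin 2) (Fin 2) K := !![0, 1/4; 3/4, 0]
  rw [Matrix.mul_assoc] at h
  have hA : IsUnit A := IsUnit.of_mul_eq_one _ h
  have hDA' : Ω₂ * Dᵀ * A = 1 := mul_eq_one_comm.mp h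
  have hΩ₂ : Ω₂inv * Ω₂ = 1 := by
    rw [Matrix.mul_fin_two, Matrix.one_fin_two]; norm_num
  have hDA : Dᵀ * A = Ω₂inv := calc
    Dᵀ * A = Ω₂inv * Ω₂ * (Dᵀ * A) := by rw [hΩ₂, Matrix.one_mul]
    _ = Ω₂inv := by rw [Matrix.mul_assoc, ← Matrix.mul_assoc Ω₂, hDA', Matrix.mul_one]
  have hT : Ω₂invᵀ * !![0, 4/3 * t; -(4/3 * t), 0] * Ω₂inv = -(t / 4) • !![0, 1; -1, 0] := by
    ext i j; fin_cases i <;> fin_cases j <;> simp [Ω₂inv, Matrix.mul_apply, Fin.sum_univ_two] <;> ring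
  have hJ : (!![0, 1; -1, 0] : Matrix (Fin 2) (Fin 2) K) ≠ 0 :=
    fun hJ => one_ne_zero (congrFun₂ hJ 0 1)
  rw [← ((isUnit_transpose A).mpr hA).mul_right_eq_zero, ← hA.mul_left_eq_zero,
    Matrix.transpose_mul_congr_mul_of_mul_mul_eq_one _ _ hDA',
    Matrix.sub_transpose_fin_two, hDA, hT, ← add_smul, smul_eq_zero, or_iff_left hJ,
    ← sub_eq_add_neg, sub_eq_zero]

/-- For a `4 × 4` matrix `S` with vanishing upper-right `2 × 2` block, the symplectic
compatibility `S·Ω·Sᵀ = Φ` is equivalent to `S₁·Ω₂·S₄ᵀ = I₂` together with the scalar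
relation `s₄₂s₂₁ − s₄₁s₂₂ + s₃₂s₁₁ − s₃₁s₁₂ = t₂/4`. -/
theorem block_symplectic_iff {K : Type*} [Field K] [CharZero K]
    (t2 s11 s12 s21 s22 s31 s32 s33 s34 s41 s42 s43 s44 : K) :
    let S : Matrix (Fin 4) (Fin 4) K :=
      !![s11, s12, 0, 0; s21, s22, 0, 0; s31, s32, s33, s34; s41, s42, s43, s44]
    let Ω : Matrix (Fin 4) (Fin 4) K :=
      !![0, 0, 0, 4/3; 0, 0, 4, 0; 0, -4, 0, (4/3)*t2; -(4/3), 0, -((4/3)*t2), 0]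
    let Φ : Matrix (Fin 4) (Fin 4) K :=
      !![0, 0, 1, 0; 0, 0, 0, 1; -1, 0, 0, 0; 0, -1, 0, 0]
    let S1 : Matrix (Fin 2) (Fin 2) K := !![s11, s12; s21, s22]
    let S4 : Matrix (Fin 2) (Fin 2) K := !![s33, s34; s43, s44]
    let Ω2 : Matrix (Fin 2) (Fin 2) K := !![0, 4/3; 4, 0]
    (S * Ω * Sᵀ = Φ ↔
      (S1 * Ω2 * S4ᵀ = (1 : Matrix (Fin 2) (Fin 2) K) ∧
        s42 * s21 - s41 * s22 + s32 * s11 - s31 * s12 = t2 / 4)) := by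
  intro S Ω Φ S1 S4 Ω2
  let S3 : Matrix (Fin 2) (Fin 2) K := !![s31, s32; s41, s42]
  let e := reindexAlgEquiv K K (finSumFinEquiv (m := 2) (n := 2))
  have hS : S = e (fromBlocks S1 0 S3 S4) := by
    ext i j; fin_cases i <;> fin_cases j <;> rfl
  -- the zero entries of the `-Ω₂ᵀ` and `-1` blocks are `-0`, not definitionally `0`
  have hΩ : Ω = e (fromBlocks 0 Ω2 (-Ω2ᵀ) !![0, (4/3)*t2; -((4/3)*t2), 0]) := by
    ext i j; fin_cases i <;> fin_cases j <;> first | rfl | exact neg_zero.symm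
  have hΦ : Φ = e (fromBlocks 0 1 (-1) 0) := by
    ext i j; fin_cases i <;> fin_cases j <;> first | rfl | exact neg_zero.symm
  have hSt : Sᵀ = e (fromBlocks S1 0 S3 S4)ᵀ := by rw [hS]; exact transpose_reindex _ _ _
  have hQ : (S1ᵀ * S3) 0 1 - (S1ᵀ * S3) 1 0 = s42 * s21 - s41 * s22 + s32 * s11 - s31 * s12 := by
    simp only [S1, S3, Matrix.mul_apply, Fin.sum_univ_two, transpose_apply, of_apply, cons_val',
      cons_val_zero, cons_val_one, cons_val_fin_one]
    ring
  rw [hSt, hS, hΩ, hΦ, ← map_mul, ← map_mul, e.injective.eq_iff,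
    fromBlocks_zero₁₂_mul_mul_transpose, fromBlocks_inj]
  constructor
  · rintro ⟨-, hX, -, hN⟩
    exact ⟨hX, hQ ▸ (block_symplectic_lowerRight_eq_zero_iff t2 hX).mp hN⟩
  · rintro ⟨hX, hQ'⟩
    exact ⟨rfl, hX, by rw [hX, transpose_one],
      (block_symplectic_lowerRight_eq_zero_iff t2 hX).mpr (hQ.trans hQ')⟩
end

section
/- Let (t₂,t₃,t₄,t₅) ∈ ℂ⁴ and (sᵢⱼ)_{1≤i≤4, j∈{1,2}} ∈ ℂ⁸, and likewise (t₂',t₃',t₄',t₅'), (sᵢⱼ'), with δ := s₁₁s₂₂ − s₁₂s₂₁ ≠ 0, δ' := s₁₁'s₂₂' − s₁₂'s₂₁' ≠ 0, t₅ ≠ 0, t₅' ≠ 0, and suppose both tuples satisfy the relation s₄₂s₂₁ − s₄₁s₂₂ + s₃₂s₁₁ − s₃₁s₁₂ = t₂/4. If the values of all of the following functions agree for the two tuples: T₄ = t₂/δ, T₈ = t₄/δ², T₁₂ = t₃²/δ³, T₁₆ = t₃t₅/δ⁴, T₂₀ = t₅²/δ⁵; Q_{i₁i₂} = s_{i₁1}s_{i₂2}/δ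 for all 1 ≤ i₁,i₂ ≤ 4; Q_{i₁i₂i₃i₄} = (s₁₂)^{i₁}(s₂₂)^{i₂}(s₃₂)^{i₃}(s₄₂)^{i₄}/δ for all nonnegative integers with i₁+i₂+i₃+i₄ = 4; P_{i₁i₂i₃i₄} = (s₁₁)^{i₁}(s₂₁)^{i₂}(s₃₁)^{i₃}(s₄₁)^{i₄}/δ³ for all nonnegative integers with i₁+i₂+i₃+i₄ = 4; U_{3i₁i₂} = t₃s_{i₁2}s_{i₂2}/δ² and U_{5i₁i₂} = t₅s_{i₁2}s_{i₂2}/δ³ for all 1 ≤ i₁,i₂ ≤ 4; and V_{3i₁i₂} = t₃s_{i₁1}s_{i₂1}/δ³ and V_{5i₁i₂} = t₅s_{i₁1}s_{i₂1}/δ⁴ for all 1 ≤ i₁,i₂ ≤ 4 — then there exists λ ∈ ℂ* such that t_m' = λ^{2m}·t_m for m = 2,3,4,5, s_{i1}' = λ³·s_{i1} and s_{i2}' = λ·s_{i2} for i = 1,2,3,4. -/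
lemma moduli_aux (t2 t3 t4 t5 : ℂ) (s1 s2 : Fin 4 → ℂ)
    (t2' t3' t4' t5' : ℂ) (s1' s2' : Fin 4 → ℂ)
    (δ δ' : ℂ) (hδ : δ ≠ 0) (hδ' : δ' ≠ 0)
    (k : Fin 4) (hk : s2 k ≠ 0)
    (h4 : s2 k ^ 4 / δ = s2' k ^ 4 / δ')
    (h3 : ∀ j, s2 k ^ 3 * s2 j / δ = s2' k ^ 3 * s2' j / δ')
    (hQk : ∀ i, s1 i * s2 k / δ = s1' i * s2' k / δ')
    (hT4 : t2 / δ = t2' / δ')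
    (hT8 : t4 / δ ^ 2 = t4' / δ' ^ 2)
    (hU3k : t3 * (s2 k * s2 k) / δ ^ 2 = t3' * (s2' k * s2' k) / δ' ^ 2)
    (hU5k : t5 * (s2 k * s2 k) / δ ^ 3 = t5' * (s2' k * s2' k) / δ' ^ 3) :
    ∃ l : ℂ, l ≠ 0 ∧
      t2' = l ^ 4 * t2 ∧ t3' = l ^ 6 * t3 ∧ t4' = l ^ 8 * t4 ∧ t5' = l ^ 10 * t5 ∧
      (∀ i : Fin 4, s1' i = l ^ 3 * s1 i) ∧ (∀ i : Fin 4, s2' i = l * s2 i) := by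
  have h4' : s2 k ^ 4 * δ' = s2' k ^ 4 * δ := by
    field_simp at h4; linear_combination h4
  have hk' : s2' k ≠ 0 := by
    intro h0
    apply hk
    have : s2 k ^ 4 = 0 := by
      have := h4'
      rw [h0] at this
      simpa [hδ'] using this
    exact pow_eq_zero_iff (by norm_num) |>.mp this
  set l : ℂ := s2' k / s2 k with hl_def
  have hl : l ≠ 0 := div_ne_zero hk' hk
  have hδ'eq : δ' = l ^ 4 * δ := by
    rw [hl_def]
    field_simp
    linear_combination h4'
  have hs2 : ∀ j, s2' j = l * s2 j := by
    intro j
    have h := h3 j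
    have h' : s2 k ^ 3 * s2 j * δ' = s2' k ^ 3 * s2' j * δ := by
      field_simp at h; linear_combination h
    have key : s2 j * s2' k ^ 4 * δ = s2' k ^ 3 * s2' j * δ * s2 k := by
      linear_combination s2 k * h' - s2 j * h4'
    have P : s2' j * s2 k = s2 j * s2' k :=
      mul_left_cancel₀ (mul_ne_zero (pow_ne_zero 3 hk') hδ)
        (by linear_combination -key)
    rw [hl_def]
    field_simp
    linear_combination P
  have hs1 : ∀ i, s1' i = l ^ 3 * s1 i := by
    intro i
    have h := hQk i
    have h' : s1 i * s2 k * δ' = s1' i * s2' k * δ := by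
      field_simp at h; linear_combination h
    have key : s1' i * s2' k * δ * s2 k ^ 4 = s1 i * s2 k * s2' k ^ 4 * δ := by
      linear_combination s1 i * s2 k * h4' - s2 k ^ 4 * h'
    have P : s1' i * s2 k ^ 3 = s1 i * s2' k ^ 3 :=
      mul_left_cancel₀ (mul_ne_zero (mul_ne_zero hk' hδ) hk)
        (by linear_combination key)
    rw [hl_def]
    field_simp
    linear_combination P
  have ht2 : t2' = l ^ 4 * t2 := by
    have h' : t2 * δ' = t2' * δ := by field_simp at hT4; linear_combination hT4
    apply mul_left_cancel₀ hδ
    linear_combination t2 * hδ'eq - h'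
  have ht4 : t4' = l ^ 8 * t4 := by
    have h' : t4 * δ' ^ 2 = t4' * δ ^ 2 := by field_simp at hT8; linear_combination hT8
    apply mul_left_cancel₀ (pow_ne_zero 2 hδ)
    linear_combination t4 * (δ' + l ^ 4 * δ) * hδ'eq - h'
  have ht3 : t3' = l ^ 6 * t3 := by
    have h' : t3 * (s2 k * s2 k) * δ' ^ 2 = t3' * (s2' k * s2' k) * δ ^ 2 := by
      field_simp at hU3k; linear_combination hU3k
    have key : t3 * s2' k ^ 8 * δ ^ 2 * s2 k ^ 2 = t3' * s2' k ^ 2 * δ ^ 2 * s2 k ^ 8 := by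
      linear_combination s2 k ^ 8 * h' -
        t3 * s2 k ^ 2 * (s2 k ^ 4 * δ' + s2' k ^ 4 * δ) * h4'
    have P : t3' * s2 k ^ 6 = t3 * s2' k ^ 6 :=
      mul_left_cancel₀
        (mul_ne_zero (mul_ne_zero (pow_ne_zero 2 hk') (pow_ne_zero 2 hδ)) (pow_ne_zero 2 hk))
        (by linear_combination -key)
    rw [hl_def]
    field_simp
    linear_combination P
  have ht5 : t5' = l ^ 10 * t5 := by
    have h' : t5 * (s2 k * s2 k) * δ' ^ 3 = t5' * (s2' k * s2' k) * δ ^ 3 := by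
      field_simp at hU5k; linear_combination hU5k
    have key : t5 * s2' k ^ 12 * δ ^ 3 * s2 k ^ 2 = t5' * s2' k ^ 2 * δ ^ 3 * s2 k ^ 12 := by
      linear_combination s2 k ^ 12 * h' -
        t5 * s2 k ^ 2 * (s2 k ^ 8 * δ' ^ 2 + s2 k ^ 4 * δ' * s2' k ^ 4 * δ + s2' k ^ 8 * δ ^ 2) * h4'
    have P : t5' * s2 k ^ 10 = t5 * s2' k ^ 10 :=
      mul_left_cancel₀
        (mul_ne_zero (mul_ne_zero (pow_ne_zero 2 hk') (pow_ne_zero 3 hδ)) (pow_ne_zero 2 hk))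
        (by linear_combination -key)
    rw [hl_def]
    field_simp
    linear_combination P
  exact ⟨l, hl, ht2, ht3, ht4, ht5, hs1, hs2⟩

/-- The functions `T, Q, P, U, V` of Proposition `14.04.2019.dubai` separate the
`ℂ*`-orbits: two points of the parameter space (with `δ ≠ 0`, `t₅ ≠ 0`, satisfying the
defining relation) at which all listed functions take the same values lie in the same
orbit of the weighted `ℂ*`-action `λ·(t,s) = (λ^{2m} tₘ, λ³ s_{i1}, λ s_{i2})`. -/
theorem moduli_embedding
    (t2 t3 t4 t5 : ℂ) (s1 s2 : Fin 4 → ℂ)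
    (t2' t3' t4' t5' : ℂ) (s1' s2' : Fin 4 → ℂ)
    (δ δ' : ℂ)
    (hδdef : δ = s1 0 * s2 1 - s2 0 * s1 1)
    (hδ'def : δ' = s1' 0 * s2' 1 - s2' 0 * s1' 1)
    (hδ : δ ≠ 0) (hδ' : δ' ≠ 0) (ht5 : t5 ≠ 0) (ht5' : t5' ≠ 0)
    (hrel : s2 3 * s1 1 - s1 3 * s2 1 + s2 2 * s1 0 - s1 2 * s2 0 = t2 / 4)
    (hrel' : s2' 3 * s1' 1 - s1' 3 * s2' 1 + s2' 2 * s1' 0 - s1' 2 * s2' 0 = t2' / 4)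
    (hT4 : t2 / δ = t2' / δ')
    (hT8 : t4 / δ ^ 2 = t4' / δ' ^ 2)
    (hT12 : t3 ^ 2 / δ ^ 3 = t3' ^ 2 / δ' ^ 3)
    (hT16 : t3 * t5 / δ ^ 4 = t3' * t5' / δ' ^ 4)
    (hT20 : t5 ^ 2 / δ ^ 5 = t5' ^ 2 / δ' ^ 5)
    (hQ : ∀ i j : Fin 4, s1 i * s2 j / δ = s1' i * s2' j / δ')
    (hQ4 : ∀ a b c d : ℕ, a + b + c + d = 4 →
      (s2 0) ^ a * (s2 1) ^ b * (s2 2) ^ c * (s2 3) ^ d / δ =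
      (s2' 0) ^ a * (s2' 1) ^ b * (s2' 2) ^ c * (s2' 3) ^ d / δ')
    (hP4 : ∀ a b c d : ℕ, a + b + c + d = 4 →
      (s1 0) ^ a * (s1 1) ^ b * (s1 2) ^ c * (s1 3) ^ d / δ ^ 3 =
      (s1' 0) ^ a * (s1' 1) ^ b * (s1' 2) ^ c * (s1' 3) ^ d / δ' ^ 3)
    (hU3 : ∀ i j : Fin 4, t3 * (s2 i * s2 j) / δ ^ 2 = t3' * (s2' i * s2' j) / δ' ^ 2)
    (hU5 : ∀ i j : Fin 4, t5 * (s2 i * s2 j) / δ ^ 3 = t5' * (s2' i * s2' j) / δ' ^ 3)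
    (hV3 : ∀ i j : Fin 4, t3 * (s1 i * s1 j) / δ ^ 3 = t3' * (s1' i * s1' j) / δ' ^ 3)
    (hV5 : ∀ i j : Fin 4, t5 * (s1 i * s1 j) / δ ^ 4 = t5' * (s1' i * s1' j) / δ' ^ 4) :
    ∃ l : ℂ, l ≠ 0 ∧
      t2' = l ^ 4 * t2 ∧ t3' = l ^ 6 * t3 ∧ t4' = l ^ 8 * t4 ∧ t5' = l ^ 10 * t5 ∧
      (∀ i : Fin 4, s1' i = l ^ 3 * s1 i) ∧ (∀ i : Fin 4, s2' i = l * s2 i) := by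
  have hk01 : s2 0 ≠ 0 ∨ s2 1 ≠ 0 := by
    by_contra h
    push_neg at h
    exact hδ (by rw [hδdef, h.1, h.2]; ring)
  rcases hk01 with hk | hk
  · refine moduli_aux t2 t3 t4 t5 s1 s2 t2' t3' t4' t5' s1' s2' δ δ' hδ hδ' 0 hk
      (by linear_combination hQ4 4 0 0 0 (by norm_num))
      (fun j => ?_) (fun i => hQ i 0) hT4 hT8 (hU3 0 0) (hU5 0 0)
    fin_cases j
    · show s2 0 ^ 3 * s2 0 / δ = s2' 0 ^ 3 * s2' 0 / δ'
      linear_combination hQ4 4 0 0 0 (by norm_num)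
    · show s2 0 ^ 3 * s2 1 / δ = s2' 0 ^ 3 * s2' 1 / δ'
      linear_combination hQ4 3 1 0 0 (by norm_num)
    · show s2 0 ^ 3 * s2 2 / δ = s2' 0 ^ 3 * s2' 2 / δ'
      linear_combination hQ4 3 0 1 0 (by norm_num)
    · show s2 0 ^ 3 * s2 3 / δ = s2' 0 ^ 3 * s2' 3 / δ'
      linear_combination hQ4 3 0 0 1 (by norm_num)
  · refine moduli_aux t2 t3 t4 t5 s1 s2 t2' t3' t4' t5' s1' s2' δ δ' hδ hδ' 1 hk
      (by linear_combination hQ4 0 4 0 0 (by norm_num))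
      (fun j => ?_) (fun i => hQ i 1) hT4 hT8 (hU3 1 1) (hU5 1 1)
    fin_cases j
    · show s2 1 ^ 3 * s2 0 / δ = s2' 1 ^ 3 * s2' 0 / δ'
      linear_combination hQ4 1 3 0 0 (by norm_num)
    · show s2 1 ^ 3 * s2 1 / δ = s2' 1 ^ 3 * s2' 1 / δ'
      linear_combination hQ4 0 4 0 0 (by norm_num)
    · show s2 1 ^ 3 * s2 2 / δ = s2' 1 ^ 3 * s2' 2 / δ'
      linear_combination hQ4 0 3 1 0 (by norm_num)
    · show s2 1 ^ 3 * s2 3 / δ = s2' 1 ^ 3 * s2' 3 / δ'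
      linear_combination hQ4 0 3 0 1 (by norm_num)
end
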